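/- arXiv:1309.7442 — 6 statements merged into one kernel-verified Lean document; each statement's English description precedes it below -/
import Mathlib

section
/- Let k be a field, G a group, χ ∈ Ĝ a k-valued character with infinite order, and H = kG(χ⁻¹, a, 0) the Hopf-Ore extension with relations xg = χ⁻¹(g)gx for g ∈ G. For each character λ of G, let V_λ be the one-dimensional H-module with g·v = λ(g)v and x·v = 0. Then every simple weight H-module is isomorphic to V_λ for a unique λ ∈ Ĝ. -/
open scoped TensorProduct

/-- The Hopf–Ore extension `H = kG(χ⁻¹, a, 0)` of a group algebra `kG`:
`H` is generated by (the image of) `G` and `x` with relation `x g = χ⁻¹(g) g x`,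
`a` is central in `G` with `χ(a) ≠ 1`, and the elements `g x^i` form a `k`-basis. -/
structure HopfOreExt (k G H : Type*) [Field k] [Group G] [Ring H] [Algebra k H] where
  ι : G →* H
  x : H
  a : G
  χ : G →* kˣ
  ha_central : ∀ g : G, a * g = g * a
  hχa : (χ a : k) ≠ 1
  rel : ∀ g : G, x * ι g = (χ g : k)⁻¹ • (ι g * x)
  bas : Module.Basis (G × ℕ) k H
  bas_eq : ∀ p : G × ℕ, bas p = ι p.1 * x ^ p.2

variable {k G H : Type*} [Field k] [Group G] [Ring H] [Algebra k H]

/-- A module is a weight module iff it is spanned by weight vectors. -/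
def IsWeightModule (D : HopfOreExt k G H) (M : Type*) [AddCommGroup M] [Module k M]
    [Module H M] [IsScalarTower k H M] : Prop :=
  Submodule.span k {v : M | ∃ lam : G →* kˣ, ∀ g : G, D.ι g • v = (lam g : k) • v} = ⊤

section Aux

variable (D : HopfOreExt k G H) {M : Type*} [AddCommGroup M] [Module k M]
  [Module H M] [IsScalarTower k H M]

lemma aux_central_smul (h : H) (c : k) (v : M) : h • (c • v) = c • (h • v) := by
  rw [← algebraMap_smul H c v, ← mul_smul, ← Algebra.commutes, mul_smul, algebraMap_smul]

lemma aux_comm (g : G) : D.ι g * D.x = (D.χ g : k) • (D.x * D.ι g) := by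
  rw [D.rel g, smul_smul, mul_inv_cancel₀ (Units.ne_zero (D.χ g)), one_smul]

lemma aux_mulX (g : G) (i : ℕ) :
    D.ι g * D.x ^ i = ((D.χ g : k) ^ i) • (D.x ^ i * D.ι g) := by
  induction i with
  | zero => simp
  | succ i ih =>
    rw [pow_succ, ← mul_assoc, ih, smul_mul_assoc, mul_assoc, aux_comm D g,
      mul_smul_comm, smul_smul, ← mul_assoc, ← pow_succ]

lemma aux_act (g : G) (i : ℕ) {v : M} {lam : G →* kˣ}
    (hv : ∀ g : G, D.ι g • v = (lam g : k) • v) :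
    D.ι g • (D.x ^ i • v) = ((lam g : k) * (D.χ g : k) ^ i) • (D.x ^ i • v) := by
  rw [← mul_smul, aux_mulX D g i, smul_assoc, mul_smul, hv g,
    aux_central_smul, smul_smul, mul_comm]

lemma aux_nopow (hord : ¬ IsOfFinOrder D.χ) {w : M} {lam : G →* kˣ}
    (hwt : ∀ g : G, D.ι g • w = (lam g : k) • w) :
    ∀ (n : ℕ) (c : ℕ → k),
      w = ∑ i ∈ Finset.range n, c i • (D.x ^ (i + 1) • w) → w = 0 := by
  intro n
  induction n with
  | zero => intro c h; simpa using h
  | succ n ih =>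
    intro c hrep
    obtain ⟨g, hg⟩ : ∃ g : G, ((D.χ g : k)) ^ (n + 1) ≠ 1 := by
      have hne : D.χ ^ (n + 1) ≠ 1 := by
        intro h1
        exact hord (isOfFinOrder_iff_pow_eq_one.mpr ⟨n + 1, Nat.succ_pos n, h1⟩)
      by_contra hcon
      push_neg at hcon
      apply hne
      ext g
      have := hcon g
      simpa [Units.ext_iff] using this
    set u : k := (D.χ g : k) with hu
    set L : k := ((lam g : kˣ) : k) with hL
    have A : L • w = ∑ i ∈ Finset.range (n + 1),
        (c i * (L * u ^ (i + 1))) • (D.x ^ (i + 1) • w) := by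
      have h2 : D.ι g • w = D.ι g •
          ∑ i ∈ Finset.range (n + 1), c i • (D.x ^ (i + 1) • w) := by rw [← hrep]
      rw [hwt g, Finset.smul_sum] at h2
      rw [h2]
      refine Finset.sum_congr rfl fun i _ => ?_
      rw [aux_central_smul, aux_act D g (i + 1) hwt, smul_smul]
    have B : (L * u ^ (n + 1)) • w = ∑ i ∈ Finset.range (n + 1),
        (c i * (L * u ^ (n + 1))) • (D.x ^ (i + 1) • w) := by
      conv_lhs => rw [hrep]
      rw [Finset.smul_sum]
      refine Finset.sum_congr rfl fun i _ => ?_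
      rw [smul_smul, mul_comm]
    have C : (L * (1 - u ^ (n + 1))) • w = ∑ i ∈ Finset.range n,
        (c i * (L * u ^ (i + 1)) - c i * (L * u ^ (n + 1))) • (D.x ^ (i + 1) • w) := by
      have hsub : L • w - (L * u ^ (n + 1)) • w = ∑ i ∈ Finset.range (n + 1),
          (c i * (L * u ^ (i + 1)) - c i * (L * u ^ (n + 1))) • (D.x ^ (i + 1) • w) := by
        rw [A, B, ← Finset.sum_sub_distrib]
        exact Finset.sum_congr rfl fun i _ => (sub_smul _ _ _).symm
      rw [Finset.sum_range_succ, sub_self, zero_smul, add_zero, ← sub_smul] at hsub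
      rw [← hsub]
      congr 1
      ring
    have ht : (L * (1 - u ^ (n + 1))) ≠ 0 := by
      refine mul_ne_zero (Units.ne_zero _) ?_
      intro h0
      exact hg (by linear_combination -h0)
    have hfin : w = ∑ i ∈ Finset.range n,
        ((L * (1 - u ^ (n + 1)))⁻¹ *
          (c i * (L * u ^ (i + 1)) - c i * (L * u ^ (n + 1)))) • (D.x ^ (i + 1) • w) := by
      calc w = (L * (1 - u ^ (n + 1)))⁻¹ • ((L * (1 - u ^ (n + 1))) • w) := by
              rw [smul_smul, inv_mul_cancel₀ ht, one_smul]
        _ = _ := by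
              rw [C, Finset.smul_sum]
              exact Finset.sum_congr rfl fun i _ => by rw [smul_smul]
    exact ih _ hfin

end Aux

/-- For `χ` of infinite order, every simple weight `H`-module is isomorphic to the
one-dimensional module `V_λ` (on which `x` acts by `0` and `g` acts by `λ g`)
for a unique character `λ` of `G`. -/
theorem simple_weight_module_of_infinite_order (D : HopfOreExt k G H)
    (hord : ¬ IsOfFinOrder D.χ)
    (M : Type*) [AddCommGroup M] [Module k M] [Module H M] [IsScalarTower k H M]
    (hw : IsWeightModule D M) (hs : IsSimpleModule H M) :
    ∃! lam : G →* kˣ, Module.finrank k M = 1 ∧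
      ∀ v : M, D.x • v = 0 ∧ ∀ g : G, D.ι g • v = (lam g : k) • v := by
  classical
  have : Nontrivial M := IsSimpleModule.nontrivial H M
  -- get a nonzero weight vector
  obtain ⟨w, ⟨lam, hwt⟩, hw0⟩ :
      ∃ w : M, (∃ lam : G →* kˣ, ∀ g : G, D.ι g • w = (lam g : k) • w) ∧ w ≠ 0 := by
    by_contra hcon
    push_neg at hcon
    have hsub : {v : M | ∃ lam : G →* kˣ, ∀ g : G, D.ι g • v = (lam g : k) • v}
        ⊆ (⊥ : Submodule k M) := by
      intro v hv
      simpa [Submodule.mem_bot] using hcon v hv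
    obtain ⟨m, hm⟩ := exists_ne (0 : M)
    have : m ∈ Submodule.span k
        {v : M | ∃ lam : G →* kˣ, ∀ g : G, D.ι g • v = (lam g : k) • v} := by
      rw [hw]; trivial
    have := Submodule.span_le.mpr hsub this
    exact hm (by simpa [Submodule.mem_bot] using this)
  -- `x • w = 0`
  have hxw : D.x • w = 0 := by
    rcases hs.eq_bot_or_eq_top (Submodule.span H {D.x • w}) with hbot | htop
    · have := Submodule.mem_span_singleton_self (R := H) (D.x • w)
      rw [hbot] at this
      simpa [Submodule.mem_bot] using this
    · exfalso
      set S : Submodule k M :=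
        Submodule.span k (Set.range fun i : ℕ => D.x ^ (i + 1) • w) with hS
      have key : ∀ h : H, h • (D.x • w) ∈ S := by
        intro h
        have hh : h ∈ Submodule.span k (Set.range D.bas) := by
          rw [D.bas.span_eq]; trivial
        induction hh using Submodule.span_induction with
        | mem z hz =>
          obtain ⟨p, rfl⟩ := hz
          have hx2 : D.x ^ p.2 • (D.x • w) = D.x ^ (p.2 + 1) • w := by
            rw [smul_smul, ← pow_succ]
          rw [D.bas_eq p, mul_smul, hx2, aux_act D p.1 (p.2 + 1) hwt]
          exact S.smul_mem _ (Submodule.subset_span ⟨p.2, rfl⟩)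
        | zero => simp only [zero_smul]; exact S.zero_mem
        | add y z _ _ hy hz => rw [add_smul]; exact S.add_mem hy hz
        | smul a y _ hy => rw [smul_assoc]; exact S.smul_mem a hy
      have hwS : w ∈ S := by
        have : w ∈ Submodule.span H {D.x • w} := by rw [htop]; trivial
        obtain ⟨h, hh⟩ := Submodule.mem_span_singleton.mp this
        rw [← hh]; exact key h
      obtain ⟨c, hc⟩ := Finsupp.mem_span_range_iff_exists_finsupp.mp hwS
      set n : ℕ := c.support.sup id + 1 with hn
      have hsupp : c.support ⊆ Finset.range n := by
        intro i hi
        exact Finset.mem_range.mpr (Nat.lt_succ_of_le (Finset.le_sup (f := id) hi))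
      have hrep : w = ∑ i ∈ Finset.range n, c i • (D.x ^ (i + 1) • w) := by
        conv_lhs => rw [← hc]
        exact Finsupp.sum_of_support_subset c hsupp _ (fun i _ => zero_smul k _)
      exact hw0 (aux_nopow D hord hwt n (fun i => c i) hrep)
  -- `M` is spanned by `w` over `k`
  have key2 : ∀ h : H, h • w ∈ Submodule.span k {w} := by
    intro h
    have hh : h ∈ Submodule.span k (Set.range D.bas) := by
      rw [D.bas.span_eq]; trivial
    induction hh using Submodule.span_induction with
    | mem z hz =>
      obtain ⟨p, rfl⟩ := hz
      rw [D.bas_eq p, mul_smul]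
      rcases p with ⟨g, i⟩
      rcases i with _ | j
      · simp only [pow_zero, one_smul]
        rw [hwt g]
        exact Submodule.smul_mem _ _ (Submodule.mem_span_singleton_self w)
      · have : D.x ^ (j + 1) • w = 0 := by
          rw [pow_succ, mul_smul, hxw, smul_zero]
        rw [this, smul_zero]
        exact Submodule.zero_mem _
    | zero => simp only [zero_smul]; exact Submodule.zero_mem _
    | add y z _ _ hy hz => rw [add_smul]; exact Submodule.add_mem _ hy hz
    | smul a y _ hy => rw [smul_assoc]; exact Submodule.smul_mem _ a hy
  have htopw : Submodule.span H {w} = ⊤ := by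
    rcases hs.eq_bot_or_eq_top (Submodule.span H {w}) with hbot | htop
    · exfalso
      have := Submodule.mem_span_singleton_self (R := H) w
      rw [hbot] at this
      exact hw0 (by simpa [Submodule.mem_bot] using this)
    · exact htop
  have hall : ∀ v : M, ∃ c : k, c • w = v := by
    intro v
    have : v ∈ Submodule.span H {w} := by rw [htopw]; trivial
    obtain ⟨h, hh⟩ := Submodule.mem_span_singleton.mp this
    have := key2 h
    rw [hh] at this
    exact Submodule.mem_span_singleton.mp this
  refine ⟨lam, ⟨finrank_eq_one w hw0 hall, ?_⟩, ?_⟩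
  · intro v
    obtain ⟨c, rfl⟩ := hall v
    constructor
    · rw [aux_central_smul, hxw, smul_zero]
    · intro g
      rw [aux_central_smul, hwt g, smul_smul, smul_smul, mul_comm]
  · rintro lam' ⟨_, hprop⟩
    ext g
    have h1 := (hprop w).2 g
    have h2 := hwt g
    rw [h1] at h2
    have h3 : ((lam' g : k) - (lam g : k)) • w = 0 := by
      rw [sub_smul, h2, sub_self]
    rcases smul_eq_zero.mp h3 with h4 | h4
    · exact sub_eq_zero.mp h4
    · exact absurd h4 hw0
end

section
/- Let H be the Hopf-Ore extension kG(χ⁻¹, a, 0) and λ a character of G. The Verma module M(λ) = H ⊗_{kG} V_λ is an indecomposable weight H-module; moreover x·M(λ) is a maximal submodule and M(λ)/(x·M(λ)) ≅ V_λ. -/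
open scoped TensorProduct

variable {k G H : Type*} [Field k] [Group G] [Ring H] [Algebra k H]

namespace VermaAux

open Polynomial

lemma iota_mul_x (D : HopfOreExt k G H) (g : G) :
    D.ι g * D.x = (D.χ g : k) • (D.x * D.ι g) := by
  rw [D.rel g, smul_smul, mul_inv_cancel₀ (Units.ne_zero (D.χ g)), one_smul]

lemma iota_mul_xpow (D : HopfOreExt k G H) (g : G) (i : ℕ) :
    D.ι g * D.x ^ i = ((D.χ g : k) ^ i) • (D.x ^ i * D.ι g) := by
  induction i with
  | zero => simp
  | succ n ih =>
    rw [pow_succ, ← mul_assoc, ih, smul_mul_assoc, mul_assoc, iota_mul_x,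
      mul_smul_comm, smul_smul, ← pow_succ, mul_assoc]

/-- Every element of `H` moves past `x` on the left. -/
lemma exists_mul_x (D : HopfOreExt k G H) (h : H) : ∃ h' : H, h * D.x = D.x * h' := by
  have hmem : h ∈ (⊤ : Submodule k H) := trivial
  rw [← D.bas.span_eq] at hmem
  induction hmem using Submodule.span_induction with
  | mem y hy =>
    obtain ⟨⟨g, j⟩, rfl⟩ := hy
    refine ⟨((D.χ g : k) ^ (j + 1)) • (D.x ^ j * D.ι g), ?_⟩
    rw [D.bas_eq]
    rw [mul_assoc, ← pow_succ, iota_mul_xpow D g (j + 1), pow_succ' D.x j, mul_assoc,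
      mul_smul_comm]
  | zero => exact ⟨0, by simp⟩
  | add y z _ _ hy hz =>
    obtain ⟨y', hy'⟩ := hy; obtain ⟨z', hz'⟩ := hz
    exact ⟨y' + z', by rw [add_mul, hy', hz', mul_add]⟩
  | smul c y _ hy =>
    obtain ⟨y', hy'⟩ := hy
    exact ⟨c • y', by rw [smul_mul_assoc, hy', mul_smul_comm]⟩

section Module

variable {M : Type*} [AddCommGroup M] [Module k M] [Module H M] [IsScalarTower k H M]

/-- Left multiplication by `h : H` as a `k`-linear map on `M`. -/
def hSmul (h : H) : M →ₗ[k] M where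
  toFun m := h • m
  map_add' := smul_add h
  map_smul' c m := by
    simp only [RingHom.id_apply]
    show h • (c • m) = c • (h • m)
    rw [← algebraMap_smul H c m, ← mul_smul, ← Algebra.commutes c h, mul_smul,
      algebraMap_smul]

@[simp] lemma hSmul_apply (h : H) (m : M) : hSmul (k := k) h m = h • m := rfl

variable (D : HopfOreExt k G H) (lam : G →* kˣ) (b : Module.Basis ℕ k M) (v : M)

section

variable (hb : ∀ i : ℕ, b i = D.x ^ i • v) (hg : ∀ g : G, D.ι g • v = (lam g : k) • v)

include hb

lemma x_smul_b (i : ℕ) : D.x • b i = b (i + 1) := by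
  rw [hb i, hb (i + 1), ← mul_smul, ← pow_succ']

include hg in
lemma iota_smul_b (g : G) (i : ℕ) :
    D.ι g • b i = ((D.χ g : k) ^ i * (lam g : k)) • b i := by
  rw [hb i, ← mul_smul, iota_mul_xpow, smul_assoc, mul_smul (D.x ^ i) (D.ι g) v, hg,
    ← smul_comm ((lam g : k)) (D.x ^ i) v, smul_smul]

/-- image of the `x`-action in coordinates: coordinate `0` vanishes -/
lemma repr_x_smul (u : M) : b.repr (D.x • u) 0 = 0 := by
  have h : (b.coord 0).comp (hSmul D.x) = 0 := by
    apply b.ext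
    intro i
    simp only [LinearMap.comp_apply, hSmul_apply, LinearMap.zero_apply]
    rw [x_smul_b D b v hb i, Module.Basis.coord_apply, b.repr_self]
    simp
  have := LinearMap.congr_fun h u
  simpa using this

lemma exists_of_repr_zero (m : M) (hm : b.repr m 0 = 0) : ∃ u : M, m = D.x • u := by
  classical
  set f : ℕ → M := fun i => match i with | 0 => 0 | (j + 1) => b j with hf
  refine ⟨b.constr ℕ f m, ?_⟩
  have key : (hSmul D.x).comp (b.constr ℕ f) =
      LinearMap.id - (b.coord 0).smulRight (b 0) := by
    apply b.ext
    intro i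
    cases i with
    | zero =>
      simp [Module.Basis.constr_basis, hf, Module.Basis.coord_apply]
    | succ j =>
      simp only [LinearMap.comp_apply, Module.Basis.constr_basis, hf, hSmul_apply,
        LinearMap.sub_apply, LinearMap.id_apply, LinearMap.smulRight_apply,
        Module.Basis.coord_apply, b.repr_self]
      rw [x_smul_b D b v hb j]
      simp
  have := LinearMap.congr_fun key m
  simp only [LinearMap.comp_apply, hSmul_apply, LinearMap.sub_apply, LinearMap.id_apply,
    LinearMap.smulRight_apply, Module.Basis.coord_apply, hm, zero_smul, sub_zero] at this
  exact this.symm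

/-- The set `x • M` as an `H`-submodule. -/
def xSub : Submodule H M where
  carrier := {m : M | ∃ u : M, m = D.x • u}
  zero_mem' := ⟨0, (smul_zero _).symm⟩
  add_mem' := by
    rintro m₁ m₂ ⟨u₁, rfl⟩ ⟨u₂, rfl⟩
    exact ⟨u₁ + u₂, (smul_add _ _ _).symm⟩
  smul_mem' := by
    rintro h m ⟨u, rfl⟩
    obtain ⟨h', hh'⟩ := exists_mul_x D h
    exact ⟨h' • u, by rw [← mul_smul, hh', mul_smul]⟩

lemma span_eq_xSub :
    Submodule.span H {m : M | ∃ u : M, m = D.x • u} = xSub D := by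
  refine le_antisymm (Submodule.span_le.2 le_rfl) Submodule.subset_span

lemma mem_span_iff (m : M) :
    m ∈ Submodule.span H {m : M | ∃ u : M, m = D.x • u} ↔ b.repr m 0 = 0 := by
  rw [span_eq_xSub D b v hb]
  constructor
  · rintro ⟨u, rfl⟩
    exact repr_x_smul D b v hb u
  · intro hm
    exact exists_of_repr_zero D b v hb m hm

include hg in
lemma repr_iota_sub (g : G) (u : M) :
    b.repr (D.ι g • u - (lam g : k) • u) 0 = 0 := by
  have h : (b.coord 0).comp (hSmul (D.ι g) - (lam g : k) • LinearMap.id) = 0 := by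
    apply b.ext
    intro i
    simp only [LinearMap.comp_apply, LinearMap.sub_apply, hSmul_apply,
      LinearMap.smul_apply, LinearMap.id_apply, LinearMap.zero_apply, map_sub, map_smul]
    rw [iota_smul_b D lam b v hb hg g i]
    cases i with
    | zero =>
      simp only [map_smul, pow_zero, one_mul]
      rw [sub_eq_zero]
    | succ j =>
      simp [b.repr_self, Finsupp.single_apply]
  have := LinearMap.congr_fun h u
  simpa using this

end

/-- `aeval x p • v` in coordinates. -/
lemma repr_aeval (hb : ∀ i : ℕ, b i = D.x ^ i • v) (p : Polynomial k) :
    b.repr ((aeval D.x p) • v) = p.toFinsupp.coeff := by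
  induction p using Polynomial.induction_on' with
  | add p q hp hq =>
    rw [map_add, add_smul, map_add, hp, hq, Polynomial.toFinsupp_add, AddMonoidAlgebra.coeff_add]
  | monomial n c =>
    rw [aeval_monomial, mul_smul, algebraMap_smul, ← hb, map_smul, b.repr_self,
      Polynomial.toFinsupp_monomial]
    ext j
    simp [Finsupp.single_apply]

end Module

end VermaAux

/-- The Verma module `M(λ) = H ⊗_{kG} V_λ` (here axiomatized as a module with `k`-basis
`{x^i • v}` where `g • v = λ(g) v`) is an indecomposable weight module; `x • M(λ)` is a
maximal submodule, and the quotient is isomorphic to `V_λ` (i.e. `x` acts by zero and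
`g` acts by the scalar `λ g` on it). -/
theorem verma_indecomposable (D : HopfOreExt k G H) (lam : G →* kˣ)
    (M : Type*) [AddCommGroup M] [Module k M] [Module H M] [IsScalarTower k H M]
    (b : Module.Basis ℕ k M) (v : M) (hv : v = b 0)
    (hb : ∀ i : ℕ, b i = D.x ^ i • v)
    (hg : ∀ g : G, D.ι g • v = (lam g : k) • v) :
    IsWeightModule D M ∧
    (∀ N₁ N₂ : Submodule H M, IsCompl N₁ N₂ → N₁ = ⊥ ∨ N₂ = ⊥) ∧
    IsCoatom (Submodule.span H {m : M | ∃ u : M, m = D.x • u}) ∧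
    (∀ m : M ⧸ (Submodule.span H {m : M | ∃ u : M, m = D.x • u}),
      D.x • m = 0 ∧ ∀ g : G, D.ι g • m = algebraMap k H (lam g) • m) := by
  classical
  open VermaAux Polynomial in
  -- every element is a polynomial in x applied to v
  have hpoly : ∀ m : M, m = (aeval D.x (⟨.ofCoeff (b.repr m)⟩ : Polynomial k)) • v := by
    intro m
    apply b.repr.injective
    rw [repr_aeval D b v hb]
  have hpoly_ne : ∀ m : M, m ≠ 0 → (⟨.ofCoeff (b.repr m)⟩ : Polynomial k) ≠ 0 := by
    intro m hm h0
    apply hm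
    have : (⟨.ofCoeff (b.repr m)⟩ : Polynomial k).toFinsupp = 0 := by rw [h0]; rfl
    have : b.repr m = 0 := AddMonoidAlgebra.ofCoeff_eq_zero.1 this
    simpa using congrArg b.repr.symm this
  refine ⟨?_, ?_, ⟨?_, ?_⟩, ?_⟩
  · -- weight module
    rw [IsWeightModule, eq_top_iff, ← b.span_eq]
    apply Submodule.span_le.2
    rintro _ ⟨i, rfl⟩
    apply Submodule.subset_span
    refine ⟨lam * D.χ ^ i, fun g => ?_⟩
    rw [iota_smul_b D lam b v hb hg g i]
    congr 1
    simp only [MonoidHom.mul_apply, MonoidHom.pow_apply, Units.val_mul,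
      Units.val_pow_eq_pow_val]
    ring
  · -- indecomposable
    intro N₁ N₂ hc
    by_contra hcon
    push_neg at hcon
    obtain ⟨h₁, h₂⟩ := hcon
    obtain ⟨m₁, hm₁, hm₁0⟩ := Submodule.exists_mem_ne_zero_of_ne_bot h₁
    obtain ⟨m₂, hm₂, hm₂0⟩ := Submodule.exists_mem_ne_zero_of_ne_bot h₂
    set p₁ : Polynomial k := ⟨.ofCoeff (b.repr m₁)⟩ with hp₁
    set p₂ : Polynomial k := ⟨.ofCoeff (b.repr m₂)⟩ with hp₂
    set w : M := (aeval D.x (p₁ * p₂)) • v with hw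
    have hw1 : w ∈ N₁ := by
      have : w = (aeval D.x p₂) • m₁ := by
        rw [hw, mul_comm p₁ p₂, map_mul, mul_smul, ← hpoly m₁]
      rw [this]
      exact N₁.smul_mem _ hm₁
    have hw2 : w ∈ N₂ := by
      have : w = (aeval D.x p₁) • m₂ := by
        rw [hw, map_mul, mul_smul, ← hpoly m₂]
      rw [this]
      exact N₂.smul_mem _ hm₂
    have hw0 : w ≠ 0 := by
      intro h0
      have : (p₁ * p₂).toFinsupp.coeff = 0 := by
        rw [← repr_aeval D b v hb (p₁ * p₂), ← hw, h0, map_zero]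
      have hmul : p₁ * p₂ = 0 := by
        rw [← Polynomial.toFinsupp_eq_zero, ← AddMonoidAlgebra.coeff_inj]; exact this
      rcases mul_eq_zero.1 hmul with h | h
      · exact hpoly_ne m₁ hm₁0 h
      · exact hpoly_ne m₂ hm₂0 h
    have : w ∈ N₁ ⊓ N₂ := ⟨hw1, hw2⟩
    rw [hc.inf_eq_bot] at this
    exact hw0 this
  · -- span ≠ ⊤
    intro htop
    have : v ∈ Submodule.span H {m : M | ∃ u : M, m = D.x • u} := htop ▸ trivial
    rw [mem_span_iff D b v hb] at this
    rw [hv, b.repr_self] at this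
    simp at this
  · -- maximal
    intro P hP
    obtain ⟨p, hpP, hpN⟩ := SetLike.exists_of_lt hP
    rw [mem_span_iff D b v hb] at hpN
    set c : k := b.repr p 0 with hc
    have hvP : v ∈ P := by
      have hsub : p - c • v ∈ Submodule.span H {m : M | ∃ u : M, m = D.x • u} := by
        rw [mem_span_iff D b v hb]
        rw [map_sub, map_smul, hv, b.repr_self]
        simp [hc, hv]
      have hcv : c • v ∈ P := by
        have := P.sub_mem hpP (hP.le hsub)
        simpa using this
      have : (algebraMap k H c⁻¹) • (c • v) ∈ P :=
        P.smul_mem _ hcv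
      rwa [algebraMap_smul, smul_smul, inv_mul_cancel₀ hpN, one_smul] at this
    have hbi : ∀ i, b i ∈ P := fun i => by
      rw [hb i]; exact P.smul_mem _ hvP
    rw [eq_top_iff]
    intro m _
    have hm : m ∈ (⊤ : Submodule k M) := trivial
    rw [← b.span_eq] at hm
    have : Submodule.span k (Set.range b) ≤ Submodule.restrictScalars k P := by
      apply Submodule.span_le.2
      rintro _ ⟨i, rfl⟩
      exact hbi i
    exact this hm
  · -- quotient
    intro m
    obtain ⟨u, rfl⟩ := Submodule.Quotient.mk_surjective _ m
    constructor
    · rw [← Submodule.Quotient.mk_smul, Submodule.Quotient.mk_eq_zero]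
      rw [mem_span_iff D b v hb]
      exact repr_x_smul D b v hb u
    · intro g
      rw [← Submodule.Quotient.mk_smul, ← Submodule.Quotient.mk_smul,
        Submodule.Quotient.eq]
      rw [mem_span_iff D b v hb, algebraMap_smul]
      exact repr_iota_sub D lam b v hb hg g u
end

section
/- Every simple weight module over H = kG(χ⁻¹, a, 0) (with χ(a) ≠ 1) is finite dimensional. -/
open scoped TensorProduct

variable {k G H : Type*} [Field k] [Group G] [Ring H] [Algebra k H]

/-- Commutation rule in `H`: `ι g * x ^ m = χ(g)^m • (x ^ m * ι g)`. -/
lemma HopfOreExt.comm_pow (D : HopfOreExt k G H) (g : G) :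
    ∀ m : ℕ, D.ι g * D.x ^ m = ((D.χ g : k) ^ m) • (D.x ^ m * D.ι g) := by
  have hgx : D.ι g * D.x = (D.χ g : k) • (D.x * D.ι g) := by
    rw [D.rel g, smul_smul, mul_inv_cancel₀ (Units.ne_zero _ : (D.χ g : k) ≠ 0), one_smul]
  intro m
  induction m with
  | zero => simp
  | succ m ih =>
      calc D.ι g * D.x ^ (m + 1) = (D.ι g * D.x ^ m) * D.x := by
            rw [pow_succ, mul_assoc]
        _ = ((D.χ g : k) ^ m) • (D.x ^ m * D.ι g * D.x) := by rw [ih, smul_mul_assoc]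
        _ = ((D.χ g : k) ^ m) • (D.x ^ m * (D.ι g * D.x)) := by rw [mul_assoc]
        _ = ((D.χ g : k) ^ m) • (D.x ^ m * ((D.χ g : k) • (D.x * D.ι g))) := by rw [hgx]
        _ = ((D.χ g : k) ^ (m + 1)) • (D.x ^ (m + 1) * D.ι g) := by
            rw [mul_smul_comm, smul_smul, pow_succ, mul_comm ((D.χ g : k) ^ m), pow_succ,
              mul_assoc]

/-- Every simple weight module over `H = kG(χ⁻¹, a, 0)` is finite dimensional. -/
theorem simple_weight_module_finite_dimensional (D : HopfOreExt k G H)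
    (M : Type*) [AddCommGroup M] [Module k M] [Module H M] [IsScalarTower k H M]
    (hw : IsWeightModule D M) (hs : IsSimpleModule H M) :
    FiniteDimensional k M := by
  classical
  -- M is nontrivial
  have hnt : Nontrivial M := Submodule.nontrivial_iff H |>.mp inferInstance
  -- find a nonzero weight vector
  obtain ⟨v, hvS, hv0⟩ : ∃ v : M,
      (∃ lam : G →* kˣ, ∀ g : G, D.ι g • v = (lam g : k) • v) ∧ v ≠ 0 := by
    by_contra hcon
    push_neg at hcon
    have hsub : {v : M | ∃ lam : G →* kˣ, ∀ g : G, D.ι g • v = (lam g : k) • v} ⊆ {0} :=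
      fun v hv => hcon v hv
    have hle := Submodule.span_mono (R := k) hsub
    rw [hw, Submodule.span_singleton_eq_bot.mpr rfl, top_le_iff] at hle
    obtain ⟨m, hm⟩ := exists_ne (0 : M)
    have hm0 : m ∈ (⊥ : Submodule k M) := by rw [hle]; trivial
    exact hm (by simpa using hm0)
  obtain ⟨lam, hlam⟩ := hvS
  set W : ℕ → M := fun i => (D.x ^ i) • v with hW
  have hW0 : W 0 = v := by simp [hW]
  have hWsucc : ∀ i, W (i + 1) = D.x • W i := by
    intro i
    simp only [hW]
    rw [pow_succ', mul_smul]
  -- the action of a basis element on W i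
  have hbasW : ∀ (p : G × ℕ) (i : ℕ),
      D.bas p • W i = (((D.χ p.1 : k) ^ (p.2 + i)) * (lam p.1 : k)) • W (p.2 + i) := by
    intro p i
    rw [D.bas_eq]
    have h1 : (D.ι p.1 * D.x ^ p.2) • W i = (D.ι p.1 * D.x ^ (p.2 + i)) • v := by
      simp only [hW, ← mul_smul, mul_assoc, ← pow_add]
    rw [h1, D.comm_pow, smul_assoc, mul_smul, hlam,
      smul_comm (D.x ^ (p.2 + i)) ((lam p.1 : k)) v, mul_smul]
  -- the k-span of the W (i + t) is an H-submodule; if nonzero it is everything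
  have key : ∀ t : ℕ, W t ≠ 0 →
      Submodule.span k (Set.range fun i : ℕ => W (i + t)) = ⊤ := by
    intro t ht
    set T := Submodule.span k (Set.range fun i : ℕ => W (i + t)) with hT
    have hWmem : ∀ i : ℕ, W (i + t) ∈ T :=
      fun i => Submodule.subset_span ⟨i, rfl⟩
    have hsmul : ∀ (h : H) (m : M), m ∈ T → h • m ∈ T := by
      intro h m hm
      induction hm using Submodule.span_induction with
      | mem y hy =>
          obtain ⟨i, rfl⟩ := hy
          have hrepr : ((D.bas.repr h).sum fun p c => c • D.bas p) = h := by
            rw [← Finsupp.linearCombination_apply]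
            exact D.bas.linearCombination_repr h
          rw [← hrepr, Finsupp.sum, Finset.sum_smul]
          refine Submodule.sum_mem T fun p _ => ?_
          rw [smul_assoc, hbasW]
          have : p.2 + (i + t) = (p.2 + i) + t := by ring
          rw [this]
          exact T.smul_mem _ (T.smul_mem _ (hWmem _))
      | zero => simp
      | add y z hy hz ihy ihz => rw [smul_add]; exact T.add_mem ihy ihz
      | smul c y hy ihy => rw [smul_comm]; exact T.smul_mem c ihy
    let T' : Submodule H M :=
      { carrier := T
        add_mem' := fun ha hb => T.add_mem ha hb
        zero_mem' := T.zero_mem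
        smul_mem' := hsmul }
    have hT'top : T' = ⊤ := by
      rcases eq_bot_or_eq_top T' with hb | htop
      · exfalso
        have : W t ∈ T' := by
          show W t ∈ T
          simpa using hWmem 0
        rw [hb] at this
        exact ht (by simpa using this)
      · exact htop
    rw [Submodule.eq_top_iff']
    intro m
    have : m ∈ T' := hT'top ▸ Submodule.mem_top
    exact this
  -- find n with W (n+1) in the span of W 0, ..., W n
  obtain ⟨n, hkey⟩ : ∃ n : ℕ, W (n + 1) ∈ Submodule.span k (W '' Set.Iic n) := by
    by_cases hx : D.x • v = 0
    · exact ⟨0, by rw [hWsucc, hW0, hx]; exact Submodule.zero_mem _⟩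
    · have hW1 : W 1 ≠ 0 := by rwa [show (1 : ℕ) = 0 + 1 from rfl, hWsucc, hW0]
      have htop := key 1 hW1
      have hvmem : v ∈ Submodule.span k (Set.range fun i : ℕ => W (i + 1)) := by
        rw [htop]; exact Submodule.mem_top
      obtain ⟨c, hc⟩ := Finsupp.mem_span_range_iff_exists_finsupp.mp hvmem
      have hcne : c ≠ 0 := by
        rintro rfl
        rw [Finsupp.sum_zero_index] at hc
        exact hv0 hc.symm
      have hsupp : c.support.Nonempty := Finsupp.support_nonempty_iff.mpr hcne
      set n := c.support.max' hsupp with hn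
      have hcn : c n ≠ 0 := Finsupp.mem_support_iff.mp (c.support.max'_mem hsupp)
      refine ⟨n, ?_⟩
      set V := Submodule.span k (W '' Set.Iic n) with hV
      have hmemV : ∀ j, j ≤ n → W j ∈ V :=
        fun j hj => Submodule.subset_span ⟨j, hj, rfl⟩
      have hsum : ∑ i ∈ c.support.erase n, c i • W (i + 1) + c n • W (n + 1) = v := by
        rw [Finset.sum_erase_add _ _ (c.support.max'_mem hsupp)]
        exact hc
      have hterm : c n • W (n + 1) = v - ∑ i ∈ c.support.erase n, c i • W (i + 1) := by
        rw [← hsum]; abel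
      have hsummem : (∑ i ∈ c.support.erase n, c i • W (i + 1)) ∈ V := by
        refine Submodule.sum_mem V fun i hi => ?_
        have hine : i ≠ n := Finset.ne_of_mem_erase hi
        have hile : i ≤ n := c.support.le_max' i (Finset.mem_of_mem_erase hi)
        exact V.smul_mem _ (hmemV (i + 1) (Nat.succ_le_of_lt (lt_of_le_of_ne hile hine)))
      have : W (n + 1) = (c n)⁻¹ • (v - ∑ i ∈ c.support.erase n, c i • W (i + 1)) := by
        rw [← hterm, smul_smul, inv_mul_cancel₀ hcn, one_smul]
      rw [this]
      exact V.smul_mem _ (V.sub_mem (hW0 ▸ hmemV 0 (Nat.zero_le n)) hsummem)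
  -- all W j lie in the span of W 0, ..., W n
  set V := Submodule.span k (W '' Set.Iic n) with hV
  have hmemV : ∀ j, j ≤ n → W j ∈ V :=
    fun j hj => Submodule.subset_span ⟨j, hj, rfl⟩
  have hxV : ∀ m ∈ V, D.x • m ∈ V := by
    intro m hm
    induction hm using Submodule.span_induction with
    | mem y hy =>
        obtain ⟨i, hi, rfl⟩ := hy
        rw [← hWsucc]
        rcases Nat.lt_or_ge i n with h | h
        · exact hmemV _ (Nat.succ_le_of_lt h)
        · have : i = n := le_antisymm hi h
          rw [this]; exact hkey
    | zero => simp
    | add y z hy hz ihy ihz => rw [smul_add]; exact V.add_mem ihy ihz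
    | smul c y hy ihy => rw [smul_comm]; exact V.smul_mem c ihy
  have hall : ∀ j, W j ∈ V := by
    intro j
    induction j with
    | zero => exact hW0 ▸ hmemV 0 (Nat.zero_le n)
    | succ j ih => rw [hWsucc]; exact hxV _ ih
  -- conclude
  have htop0 : Submodule.span k (Set.range fun i : ℕ => W (i + 0)) = ⊤ :=
    key 0 (hW0 ▸ hv0)
  have hVtop : V = ⊤ := by
    refine le_antisymm le_top ?_
    rw [← htop0]
    refine Submodule.span_le.mpr ?_
    rintro y ⟨i, rfl⟩
    exact hall (i + 0)
  refine Module.finite_def.mpr (Submodule.fg_def.mpr ⟨W '' Set.Iic n, ?_, hVtop⟩)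
  exact (Set.finite_Iic n).image W
end

section
/- Let M be a simple weight H-module of dimension > 1. Then χ has finite order s < ∞, and M ≅ V(λ, f) for some character λ of G and some monic irreducible polynomial f(y) ≠ y in k[y]. -/
open scoped TensorProduct

variable {k G H : Type*} [Field k] [Group G] [Ring H] [Algebra k H]

/-- `M` realizes the module `V(λ, f) = M(λ)/(f(x^s)·M(λ))`, where `f = y^n - Σ α_j y^j`
is monic of degree `n`: it has a `k`-basis `m_0, …, m_{ns-1}` with
`g • m_i = χ(g)^i λ(g) • m_i`, `x • m_i = m_{i+1}` for `i < ns - 1`, and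
`x • m_{ns-1} = Σ_j α_j • m_{js}`. -/
def IsVLamF (D : HopfOreExt k G H) (lam : G →* kˣ) (s : ℕ) (f : Polynomial k)
    (M : Type*) [AddCommGroup M] [Module k M] [Module H M] [IsScalarTower k H M] : Prop :=
  ∃ (b : Module.Basis (Fin (f.natDegree * s)) k M) (m : ℕ → M),
    (∀ i : Fin (f.natDegree * s), m (i : ℕ) = b i) ∧
    (∀ i < f.natDegree * s, ∀ g : G,
      D.ι g • m i = ((D.χ g : k) ^ i * (lam g : k)) • m i) ∧
    (∀ i : ℕ, i + 1 < f.natDegree * s → D.x • m i = m (i + 1)) ∧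
    D.x • m (f.natDegree * s - 1)
      = ∑ j ∈ Finset.range f.natDegree, (-(f.coeff j)) • m (j * s)

section HOEAuxSect

set_option linter.unusedSectionVars false

namespace HOEAux

variable {M : Type*} [AddCommGroup M] [Module k M] [Module H M] [IsScalarTower k H M]

/-- smul by `h : H` as a `k`-linear map. -/
def hsmul (h : H) : M →ₗ[k] M where
  toFun w := h • w
  map_add' w₁ w₂ := smul_add h w₁ w₂
  map_smul' c w := (smul_comm c h w).symm

@[simp] lemma hsmul_apply (h : H) (w : M) : hsmul (k := k) h w = h • w := rfl

lemma span_stable {f : M →ₗ[k] M} {S : Set M}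
    (h : ∀ w ∈ S, f w ∈ Submodule.span k S) :
    ∀ w ∈ Submodule.span k S, f w ∈ Submodule.span k S := by
  intro w hw
  have hle : Submodule.span k S ≤ (Submodule.span k S).comap f := by
    rw [Submodule.span_le]; intro u hu; exact h u hu
  exact hle hw

lemma li_of_not_mem_span {V : Type*} [AddCommGroup V] [Module k V] (f : ℕ → V)
    (n : ℕ) (h : ∀ m < n, f m ∉ Submodule.span k (Set.range fun i : Fin m => f (i : ℕ))) :
    LinearIndependent k fun i : Fin n => f (i : ℕ) := by
  induction n with
  | zero => exact linearIndependent_empty_type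
  | succ n ih =>
    have hsn : (fun i : Fin (n+1) => f (i : ℕ))
        = Fin.snoc (fun i : Fin n => f (i : ℕ)) (f n) := by
      funext i
      refine Fin.lastCases ?_ ?_ i
      · simp
      · intro j; simp
    rw [hsn]
    exact linearIndependent_fin_snoc.mpr
      ⟨ih fun m hm => h m (hm.trans n.lt_succ_self), h n n.lt_succ_self⟩

variable (D : HopfOreExt k G H)

lemma chi_ne_zero (g : G) : (D.χ g : k) ≠ 0 := Units.ne_zero _

lemma gx_smul (g : G) (w : M) :
    D.ι g • D.x • w = (D.χ g : k) • D.x • D.ι g • w := by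
  have h1 : D.ι g * D.x = (D.χ g : k) • (D.x * D.ι g) := by
    rw [D.rel g, smul_smul, mul_inv_cancel₀ (chi_ne_zero D g), one_smul]
  calc D.ι g • D.x • w = (D.ι g * D.x) • w := (mul_smul _ _ _).symm
    _ = ((D.χ g : k) • (D.x * D.ι g)) • w := by rw [h1]
    _ = (D.χ g : k) • (D.x * D.ι g) • w := smul_assoc _ _ _
    _ = (D.χ g : k) • D.x • D.ι g • w := by rw [mul_smul]

lemma xpow_succ_smul (i : ℕ) (u : M) :
    D.x ^ (i + 1) • u = D.x • D.x ^ i • u := by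
  rw [← mul_smul, ← pow_succ']

lemma weight_pow {u : M} {μ : G →* kˣ} (hu : ∀ g, D.ι g • u = (μ g : k) • u)
    (i : ℕ) (g : G) :
    D.ι g • (D.x ^ i • u) = ((D.χ g : k) ^ i * (μ g : k)) • (D.x ^ i • u) := by
  induction i with
  | zero => simpa using hu g
  | succ n ih =>
    calc D.ι g • D.x ^ (n+1) • u = D.ι g • D.x • D.x ^ n • u := by rw [xpow_succ_smul]
      _ = (D.χ g : k) • D.x • D.ι g • D.x ^ n • u := gx_smul D g _
      _ = (D.χ g : k) • D.x • ((D.χ g : k) ^ n * (μ g : k)) • D.x ^ n • u := by rw [ih]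
      _ = (D.χ g : k) • ((D.χ g : k) ^ n * (μ g : k)) • D.x • D.x ^ n • u := by
          rw [smul_comm ((D.χ g : k) ^ n * (μ g : k)) D.x]
      _ = ((D.χ g : k) ^ (n+1) * (μ g : k)) • D.x ^ (n+1) • u := by
          rw [smul_smul, ← xpow_succ_smul]
          congr 1
          ring

/-- The `k`-span of the `x`-power orbit of `u`. -/
def cyc (u : M) : Submodule k M :=
  Submodule.span k (Set.range fun i : ℕ => D.x ^ i • u)

lemma self_mem_cyc (u : M) : u ∈ cyc D u :=
  Submodule.subset_span ⟨0, by simp⟩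

lemma xpow_smul_mem_cyc (u : M) (i : ℕ) : D.x ^ i • u ∈ cyc D u :=
  Submodule.subset_span ⟨i, rfl⟩

lemma cyc_x_stable (u : M) : ∀ w ∈ cyc D u, D.x • w ∈ cyc D u := by
  have := span_stable (k := k) (f := hsmul (k := k) D.x)
    (S := Set.range fun i : ℕ => D.x ^ i • u) ?_
  · exact this
  · rintro _ ⟨i, rfl⟩
    simpa [cyc, ← xpow_succ_smul] using xpow_smul_mem_cyc D u (i + 1)

lemma cyc_g_stable {u : M} {μ : G →* kˣ} (hu : ∀ g, D.ι g • u = (μ g : k) • u)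
    (g : G) : ∀ w ∈ cyc D u, D.ι g • w ∈ cyc D u := by
  have := span_stable (k := k) (f := hsmul (k := k) (D.ι g))
    (S := Set.range fun i : ℕ => D.x ^ i • u) ?_
  · exact this
  · rintro _ ⟨i, rfl⟩
    rw [hsmul_apply, weight_pow D hu]
    exact Submodule.smul_mem _ _ (xpow_smul_mem_cyc D u i)

/-- Promote a suitably stable `k`-submodule to an `H`-submodule. -/
def toHSub (W : Submodule k M)
    (hx : ∀ w ∈ W, D.x • w ∈ W) (hg : ∀ g, ∀ w ∈ W, D.ι g • w ∈ W) :
    Submodule H M where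
  carrier := W
  add_mem' := fun ha hb => W.add_mem ha hb
  zero_mem' := W.zero_mem
  smul_mem' := by
    intro h w hw
    have hxp : ∀ i, ∀ w ∈ W, D.x ^ i • w ∈ W := by
      intro i
      induction i with
      | zero => intro w hw; simpa using hw
      | succ n ih =>
        intro w hw
        rw [xpow_succ_smul]
        exact hx _ (ih w hw)
    have hb : ∀ p : G × ℕ, D.bas p • w ∈ W := by
      intro p
      rw [D.bas_eq, mul_smul]
      exact hg _ _ (hxp _ _ hw)
    have hrep := D.bas.linearCombination_repr h
    set l := D.bas.repr h with hl
    let actOn : H →ₗ[k] M :=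
      { toFun := fun h => h • w
        map_add' := fun h₁ h₂ => add_smul h₁ h₂ w
        map_smul' := fun c h => smul_assoc c h w }
    have : h • w = l.sum fun p c => c • (D.bas p • w) := by
      have h2 : h • w = actOn (l.sum fun p c => c • D.bas p) := by
        conv_lhs => rw [← hrep]
        rw [Finsupp.linearCombination_apply]
        rfl
      rw [h2, map_finsuppSum]
      exact Finsupp.sum_congr fun p _ => actOn.map_smul _ _
    rw [this]
    exact Submodule.finsuppSum_mem _ _ _ _ fun p _ => W.smul_mem _ (hb p)

@[simp] lemma mem_toHSub {W : Submodule k M} {hx} {hg} {w : M} :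
    w ∈ toHSub (k := k) D W hx hg ↔ w ∈ W := Iff.rfl

end HOEAux

end HOEAuxSect

open HOEAux in
/-- A simple weight `H`-module of dimension `> 1` forces `χ` to have finite order `s`,
and the module is isomorphic to some `V(λ, f)` with `f ≠ y` monic irreducible. -/
theorem simple_weight_module_of_dim_gt_one (D : HopfOreExt k G H)
    (M : Type*) [AddCommGroup M] [Module k M] [Module H M] [IsScalarTower k H M]
    (hw : IsWeightModule D M) (hs : IsSimpleModule H M)
    (hdim : 1 < Module.finrank k M) :
    IsOfFinOrder D.χ ∧
    ∃ (lam : G →* kˣ) (f : Polynomial k),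
      f.Monic ∧ Irreducible f ∧ f ≠ Polynomial.X ∧
      IsVLamF D lam (orderOf D.χ) f M := by
  classical
  have hfin : Module.Finite k M := Module.finite_of_finrank_pos (by omega)
  -- a nonzero weight vector
  obtain ⟨v, hvS, hv0⟩ :
      ∃ v : M, (∃ lam : G →* kˣ, ∀ g : G, D.ι g • v = (lam g : k) • v) ∧ v ≠ 0 := by
    by_contra hcon
    push_neg at hcon
    have hsub : {v : M | ∃ lam : G →* kˣ, ∀ g : G, D.ι g • v = (lam g : k) • v}
        ⊆ ((⊥ : Submodule k M) : Set M) := by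
      intro v hv
      simp [hcon v hv]
    have htop : (⊤ : Submodule k M) ≤ ⊥ := by
      rw [← hw]
      exact Submodule.span_le.mpr hsub
    have : Subsingleton M := by
      constructor
      intro a b
      have ha : a ∈ (⊥ : Submodule k M) := htop (by trivial)
      have hb : b ∈ (⊥ : Submodule k M) := htop (by trivial)
      simp only [Submodule.mem_bot] at ha hb
      rw [ha, hb]
    have : Module.finrank k M = 0 := by
      simp [Module.finrank_zero_of_subsingleton]
    omega
  obtain ⟨lam, hlam⟩ := hvS
  set xp : ℕ → M := fun i => D.x ^ i • v with hxp
  -- find the first linear dependence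
  have hex : ∃ n : ℕ, xp n ∈ Submodule.span k (Set.range fun i : Fin n => xp (i : ℕ)) := by
    by_contra hcon
    push_neg at hcon
    have hli := li_of_not_mem_span (k := k) xp (Module.finrank k M + 1)
      (fun m _ => hcon m)
    have := hli.fintype_card_le_finrank
    simp at this
  set N := Nat.find hex with hNdef
  have hNspec : xp N ∈ Submodule.span k (Set.range fun i : Fin N => xp (i : ℕ)) :=
    Nat.find_spec hex
  have hNmin : ∀ m < N, xp m ∉ Submodule.span k (Set.range fun i : Fin m => xp (i : ℕ)) :=
    fun m hm => Nat.find_min hex hm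
  have hli : LinearIndependent k fun i : Fin N => xp (i : ℕ) :=
    li_of_not_mem_span (k := k) xp N hNmin
  set W₀ := Submodule.span k (Set.range fun i : Fin N => xp (i : ℕ)) with hW₀
  have hN0 : N ≠ 0 := by
    intro h
    have hsp := Nat.find_spec hex
    rw [← hNdef, h] at hsp
    have : xp 0 = 0 := by
      simpa [Set.range_eq_empty, Submodule.span_empty] using hsp
    exact hv0 (by simpa [hxp] using this)
  have hW0x : ∀ w ∈ W₀, D.x • w ∈ W₀ := by
    have := span_stable (k := k) (f := hsmul (k := k) D.x)
      (S := Set.range fun i : Fin N => xp (i : ℕ)) ?_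
    · exact this
    · rintro _ ⟨i, rfl⟩
      rw [hsmul_apply]
      have hstep : D.x • xp (i : ℕ) = xp ((i : ℕ) + 1) := by
        simp only [hxp]
        rw [xpow_succ_smul]
      rw [hstep]
      rcases Nat.lt_or_ge ((i : ℕ) + 1) N with h | h
      · exact Submodule.subset_span ⟨⟨(i : ℕ) + 1, h⟩, rfl⟩
      · have h' : (i : ℕ) + 1 = N := by have := i.isLt; omega
        rw [h']; exact hNspec
  have hW0g : ∀ g, ∀ w ∈ W₀, D.ι g • w ∈ W₀ := by
    intro g
    have := span_stable (k := k) (f := hsmul (k := k) (D.ι g))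
      (S := Set.range fun i : Fin N => xp (i : ℕ)) ?_
    · exact this
    · rintro _ ⟨i, rfl⟩
      rw [hsmul_apply]
      show D.ι g • (D.x ^ (i : ℕ) • v) ∈ W₀
      rw [weight_pow D hlam]
      exact Submodule.smul_mem _ _ (Submodule.subset_span ⟨i, rfl⟩)
  -- W₀ is everything
  have hW0top : W₀ = ⊤ := by
    rcases hs.1.2 (toHSub (k := k) D W₀ hW0x hW0g) with h | h
    · exfalso
      have hv : v ∈ toHSub (k := k) D W₀ hW0x hW0g := by
        rw [mem_toHSub]
        have : xp 0 ∈ W₀ := Submodule.subset_span ⟨⟨0, Nat.pos_of_ne_zero hN0⟩, rfl⟩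
        simpa [hxp] using this
      rw [h] at hv
      exact hv0 (by simpa using hv)
    · rw [Submodule.eq_top_iff']
      intro w
      have : w ∈ toHSub (k := k) D W₀ hW0x hW0g := by rw [h]; trivial
      rwa [mem_toHSub] at this
  set b : Module.Basis (Fin N) k M := Module.Basis.mk hli (by rw [← hW₀, hW0top]) with hbdef
  have hb : ∀ i : Fin N, b i = xp (i : ℕ) := fun i => Module.Basis.mk_apply hli _ i
  have hrank : Module.finrank k M = N := by
    rw [Module.finrank_eq_card_basis b, Fintype.card_fin]
  have hN2 : 2 ≤ N := by omega
  set c := b.repr (xp N) with hcdef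
  have hrepr : xp N = ∑ i : Fin N, c i • xp (i : ℕ) := by
    conv_lhs => rw [← b.sum_repr (xp N)]
    exact Finset.sum_congr rfl fun i _ => by rw [hb]
  -- comparing weights
  have hweights : ∀ i : Fin N, c i ≠ 0 → ∀ g : G,
      (D.χ g : k) ^ N = (D.χ g : k) ^ (i : ℕ) := by
    intro i hci g
    have h1 : D.ι g • xp N = ((D.χ g : k) ^ N * (lam g : k)) • xp N :=
      weight_pow D hlam N g
    have h2 : D.ι g • xp N
        = ∑ j : Fin N, (c j * ((D.χ g : k) ^ (j : ℕ) * (lam g : k))) • xp (j : ℕ) := by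
      conv_lhs => rw [hrepr]
      rw [show D.ι g • (∑ j : Fin N, c j • xp (j : ℕ))
            = hsmul (k := k) (D.ι g) (∑ j : Fin N, c j • xp (j : ℕ)) from rfl, map_sum]
      refine Finset.sum_congr rfl fun j _ => ?_
      rw [map_smul, hsmul_apply]
      show c j • (D.ι g • (D.x ^ (j : ℕ) • v)) = _
      rw [weight_pow D hlam, smul_smul]
    have h3 : D.ι g • xp N
        = ∑ j : Fin N, (((D.χ g : k) ^ N * (lam g : k)) * c j) • xp (j : ℕ) := by
      rw [h1]
      conv_lhs => rw [hrepr]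
      rw [Finset.smul_sum]
      refine Finset.sum_congr rfl fun j _ => ?_
      rw [smul_smul]
    have h4 : ∑ j : Fin N, ((((D.χ g : k) ^ N * (lam g : k)) * c j)
        - (c j * ((D.χ g : k) ^ (j : ℕ) * (lam g : k)))) • xp (j : ℕ) = 0 := by
      simp only [sub_smul]
      rw [Finset.sum_sub_distrib, ← h3, ← h2, sub_self]
    have h5 := Fintype.linearIndependent_iff.mp hli _ h4 i
    have h6 : ((D.χ g : k) ^ N * (lam g : k)) * c i
        = c i * ((D.χ g : k) ^ (i : ℕ) * (lam g : k)) := sub_eq_zero.mp h5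
    have hlg : (lam g : k) ≠ 0 := Units.ne_zero _
    have h7 : (D.χ g : k) ^ N * ((lam g : k) * c i)
        = (D.χ g : k) ^ (i : ℕ) * ((lam g : k) * c i) := by
      linear_combination h6
    exact mul_right_cancel₀ (mul_ne_zero hlg hci) h7
  -- some coefficient is nonzero
  have hcex : ∃ i : Fin N, c i ≠ 0 := by
    by_contra hcon
    push_neg at hcon
    have hzero : xp N = 0 := by
      rw [hrepr]
      simp [hcon]
    set u : M := xp (N - 1) with hu
    have hub : u = b ⟨N - 1, by omega⟩ := by rw [hb]
    have hu0 : u ≠ 0 := by rw [hub]; exact b.ne_zero _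
    have hux : D.x • u = 0 := by
      have hst : D.x • xp (N - 1) = xp (N - 1 + 1) := by
        simp only [hxp]; rw [xpow_succ_smul]
      rw [hu, hst, show N - 1 + 1 = N by omega, hzero]
    have huw : ∀ g : G, D.ι g • u = (((D.χ ^ (N - 1)) * lam) g : k) • u := by
      intro g
      have hwp := weight_pow D hlam (N - 1) g
      simp only [hu, hxp]
      rw [hwp]
      norm_num [MonoidHom.mul_apply, MonoidHom.pow_apply]
    have hUx : ∀ w ∈ Submodule.span k {u}, D.x • w ∈ Submodule.span k {u} := by
      have := span_stable (k := k) (f := hsmul (k := k) D.x) (S := {u}) ?_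
      · exact this
      · intro w hw
        rw [Set.mem_singleton_iff] at hw
        subst hw
        rw [hsmul_apply, hux]
        exact Submodule.zero_mem _
    have hUg : ∀ g, ∀ w ∈ Submodule.span k {u}, D.ι g • w ∈ Submodule.span k {u} := by
      intro g
      have := span_stable (k := k) (f := hsmul (k := k) (D.ι g)) (S := {u}) ?_
      · exact this
      · intro w hw
        rw [Set.mem_singleton_iff] at hw
        subst hw
        rw [hsmul_apply, huw g]
        exact Submodule.smul_mem _ _ (Submodule.subset_span rfl)
    rcases hs.1.2 (toHSub (k := k) D (Submodule.span k {u}) hUx hUg) with h | h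
    · have hmem : u ∈ toHSub (k := k) D (Submodule.span k {u}) hUx hUg :=
        (mem_toHSub D).mpr (Submodule.subset_span rfl)
      rw [h] at hmem
      exact hu0 (by simpa using hmem)
    · have htop : Submodule.span k {u} = ⊤ := by
        rw [Submodule.eq_top_iff']
        intro z
        have : z ∈ toHSub (k := k) D (Submodule.span k {u}) hUx hUg := by rw [h]; trivial
        rwa [mem_toHSub] at this
      have : Module.finrank k M = 1 := by
        rw [← finrank_top k M, ← htop, finrank_span_singleton hu0]
      omega
  obtain ⟨i₀, hi₀⟩ := hcex
  -- finite order
  have key : ∀ i : Fin N, c i ≠ 0 → D.χ ^ (N - (i : ℕ)) = 1 := by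
    intro i hci
    ext g
    have h := hweights i hci g
    have hne : (D.χ g : k) ^ (i : ℕ) ≠ 0 := pow_ne_zero _ (chi_ne_zero D g)
    have hk : (D.χ g : k) ^ (N - (i : ℕ)) = 1 := by
      have h2 : (D.χ g : k) ^ (N - (i : ℕ)) * (D.χ g : k) ^ (i : ℕ)
          = 1 * (D.χ g : k) ^ (i : ℕ) := by
        rw [← pow_add, Nat.sub_add_cancel (le_of_lt i.isLt), one_mul, h]
      exact mul_right_cancel₀ hne h2
    rw [MonoidHom.pow_apply, MonoidHom.one_apply]
    simpa using hk
  have hord : IsOfFinOrder D.χ :=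
    isOfFinOrder_iff_pow_eq_one.mpr ⟨N - (i₀ : ℕ), by omega, key i₀ hi₀⟩
  refine ⟨hord, ?_⟩
  set s := orderOf D.χ with hsdef
  have hs0 : 0 < s := hord.orderOf_pos
  have hχs : ∀ g : G, (D.χ g : k) ^ s = 1 := by
    intro g
    have h1 : D.χ ^ s = 1 := pow_orderOf_eq_one D.χ
    have h2 : (D.χ ^ s) g = 1 := by rw [h1]; rfl
    have h3 : (D.χ g) ^ s = 1 := by rwa [MonoidHom.pow_apply] at h2
    simpa using congrArg Units.val h3
  have hdvd : ∀ i : Fin N, c i ≠ 0 → s ∣ (N - (i : ℕ)) :=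
    fun i hci => orderOf_dvd_of_pow_eq_one (key i hci)
  have hsN : s ≤ N := by
    have h1 := Nat.le_of_dvd (by omega) (hdvd i₀ hi₀)
    omega
  -- s divides N
  have hsdvdN : s ∣ N := by
    by_contra hns
    have hr0 : 0 < N % s := Nat.pos_of_ne_zero fun h => hns (Nat.dvd_of_mod_eq_zero h)
    have hrs : N % s < s := Nat.mod_lt _ hs0
    have hrN : N % s < N := by omega
    have hir : ∀ i : Fin N, c i ≠ 0 → N % s ≤ (i : ℕ) := by
      intro i hci
      obtain ⟨t, ht⟩ := hdvd i hci
      have hiN : (i : ℕ) < N := i.isLt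
      have hNi : N = (i : ℕ) + s * t := by omega
      have hmod : N % s = (i : ℕ) % s := by
        conv_lhs => rw [hNi]
        rw [Nat.add_mul_mod_self_left]
      rw [hmod]
      exact Nat.mod_le _ _
    set S : Set (Fin N) := {i : Fin N | N % s ≤ (i : ℕ)} with hS
    set W₂ := Submodule.span k (⇑b '' S) with hW₂
    have hbmem : ∀ i : Fin N, N % s ≤ (i : ℕ) → b i ∈ W₂ :=
      fun i hi => Submodule.subset_span ⟨i, hi, rfl⟩
    have hxN2 : xp N ∈ W₂ := by
      rw [hrepr]
      refine Submodule.sum_mem _ fun i _ => ?_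
      by_cases hci : c i = 0
      · simp [hci]
      · have hm := hbmem i (hir i hci)
        rw [hb i] at hm
        exact Submodule.smul_mem _ _ hm
    have hW2x : ∀ w ∈ W₂, D.x • w ∈ W₂ := by
      have := span_stable (k := k) (f := hsmul (k := k) D.x) (S := ⇑b '' S) ?_
      · exact this
      · rintro _ ⟨i, hi, rfl⟩
        rw [hsmul_apply, hb i]
        have hstep : D.x • xp (i : ℕ) = xp ((i : ℕ) + 1) := by
          simp only [hxp]; rw [xpow_succ_smul]
        rw [hstep]
        rcases Nat.lt_or_ge ((i : ℕ) + 1) N with h | h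
        · have hm := hbmem ⟨(i : ℕ) + 1, h⟩ (le_trans hi (Nat.le_succ _))
          rw [hb] at hm
          simpa using hm
        · have h' : (i : ℕ) + 1 = N := by have := i.isLt; omega
          rw [h']; exact hxN2
    have hW2g : ∀ g, ∀ w ∈ W₂, D.ι g • w ∈ W₂ := by
      intro g
      have := span_stable (k := k) (f := hsmul (k := k) (D.ι g)) (S := ⇑b '' S) ?_
      · exact this
      · rintro _ ⟨i, hi, rfl⟩
        rw [hsmul_apply, hb i]
        show D.ι g • (D.x ^ (i : ℕ) • v) ∈ W₂
        rw [weight_pow D hlam]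
        have hm := hbmem i hi
        rw [hb i] at hm
        exact Submodule.smul_mem _ _ hm
    rcases hs.1.2 (toHSub (k := k) D W₂ hW2x hW2g) with h | h
    · have hmem : b ⟨N % s, hrN⟩ ∈ toHSub (k := k) D W₂ hW2x hW2g :=
        (mem_toHSub D).mpr (hbmem _ (le_refl _))
      rw [h] at hmem
      exact b.ne_zero _ (by simpa using hmem)
    · have hvW : v ∈ W₂ := by
        have hmem : v ∈ toHSub (k := k) D W₂ hW2x hW2g := by rw [h]; trivial
        rwa [mem_toHSub] at hmem
      have h0N : 0 < N := by omega
      have h0S : (⟨0, h0N⟩ : Fin N) ∉ S := by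
        simp only [hS, Set.mem_setOf_eq]
        omega
      refine (b.linearIndependent.notMem_span_image h0S) ?_
      have hb0 : b ⟨0, h0N⟩ = v := by
        rw [hb]
        simp [hxp]
      rw [hb0]
      exact hvW
  set n := N / s with hndef
  have hn : N = n * s := by rw [hndef, Nat.div_mul_cancel hsdvdN]
  have hn1 : 1 ≤ n := by
    rcases Nat.eq_zero_or_pos n with h | h
    · rw [h] at hn; simp at hn; omega
    · exact h
  have hsi : ∀ i : Fin N, c i ≠ 0 → s ∣ (i : ℕ) := by
    intro i hci
    have h1 := Nat.dvd_sub hsdvdN (hdvd i hci)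
    have h2 : N - (N - (i : ℕ)) = (i : ℕ) := by omega
    rwa [h2] at h1
  set α : ℕ → k := fun j => if h : j * s < N then c ⟨j * s, h⟩ else 0 with hα
  have hrel2 : xp N = ∑ j ∈ Finset.range n, α j • xp (j * s) := by
    rw [hrepr]
    rw [← Finset.sum_filter_of_ne
      (p := fun i : Fin N => s ∣ (i : ℕ)) (f := fun i : Fin N => c i • xp (i : ℕ))
      (fun i _ hne => hsi i (fun h0 => hne (by simp [h0])))]
    have hN0' : 0 < N := by omega
    refine Finset.sum_nbij' (i := fun a : Fin N => (a : ℕ) / s)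
      (j := fun m : ℕ => (⟨m * s % N, Nat.mod_lt _ hN0'⟩ : Fin N)) ?_ ?_ ?_ ?_ ?_
    · intro a ha
      simp only [Finset.mem_filter] at ha
      rw [Finset.mem_range]
      rw [Nat.div_lt_iff_lt_mul hs0, ← hn]
      exact a.isLt
    · intro m hm
      rw [Finset.mem_range] at hm
      have hms : m * s < N := by rw [hn]; exact (Nat.mul_lt_mul_right hs0).mpr hm
      simp only [Finset.mem_filter, Finset.mem_univ, true_and]
      rw [Nat.mod_eq_of_lt hms]
      exact dvd_mul_left s m
    · intro a ha
      simp only [Finset.mem_filter] at ha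
      obtain ⟨-, hdva⟩ := ha
      have hms : (a : ℕ) / s * s = (a : ℕ) := Nat.div_mul_cancel hdva
      apply Fin.ext
      simp only
      rw [hms, Nat.mod_eq_of_lt a.isLt]
    · intro m hm
      rw [Finset.mem_range] at hm
      have hms : m * s < N := by rw [hn]; exact (Nat.mul_lt_mul_right hs0).mpr hm
      simp only
      rw [Nat.mod_eq_of_lt hms]
      exact Nat.mul_div_cancel m hs0
    · intro a ha
      simp only [Finset.mem_filter] at ha
      obtain ⟨-, hdva⟩ := ha
      have hms : (a : ℕ) / s * s = (a : ℕ) := Nat.div_mul_cancel hdva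
      have hlt : (a : ℕ) / s * s < N := by rw [hms]; exact a.isLt
      have hα' : α ((a : ℕ) / s) = c a := by
        simp only [hα, dif_pos hlt]
        congr 1
        exact Fin.ext hms
      rw [hα', hms]
  set f : Polynomial k :=
    Polynomial.X ^ n - ∑ j ∈ Finset.range n, Polynomial.C (α j) * Polynomial.X ^ j with hf
  have hfc : ∀ j < n, f.coeff j = -α j := by
    intro j hj
    simp only [hf, Polynomial.coeff_sub, Polynomial.coeff_X_pow,
      Polynomial.finset_sum_coeff, Polynomial.coeff_C_mul, mul_ite, mul_one, mul_zero]
    rw [Finset.sum_ite_eq, if_pos (Finset.mem_range.mpr hj),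
      if_neg (by omega : ¬ j = n), zero_sub]
  have hfmon : f.Monic := by
    rw [hf]
    apply Polynomial.monic_X_pow_sub
    apply lt_of_le_of_lt (Polynomial.degree_sum_le _ _)
    rw [Finset.sup_lt_iff (by exact_mod_cast WithBot.bot_lt_coe n)]
    intro j hj
    exact lt_of_le_of_lt (Polynomial.degree_C_mul_X_pow_le _ _)
      (by exact_mod_cast Finset.mem_range.mp hj)
  have hfdeg : f.natDegree = n := by
    rw [hf]
    have h1 : (∑ j ∈ Finset.range n, Polynomial.C (α j) * Polynomial.X ^ j).natDegree
        < (Polynomial.X ^ n : Polynomial k).natDegree := by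
      rw [Polynomial.natDegree_X_pow]
      refine lt_of_le_of_lt
        (Polynomial.natDegree_sum_le_of_forall_le _ _ fun j hj => ?_)
        (by omega : n - 1 < n)
      refine le_trans (Polynomial.natDegree_C_mul_le _ _) ?_
      rw [Polynomial.natDegree_X_pow]
      exact Nat.le_sub_one_of_lt (Finset.mem_range.mp hj)
    rw [Polynomial.natDegree_sub_eq_left_of_natDegree_lt h1, Polynomial.natDegree_X_pow]
  -- the aeval machinery
  set L : M →ₗ[k] M := hsmul (k := k) (D.x ^ s) with hL
  have hLpow : ∀ (j : ℕ) (w : M), (L ^ j) w = D.x ^ (j * s) • w := by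
    intro j
    induction j with
    | zero => intro w; simp
    | succ m ih =>
      intro w
      rw [pow_succ', Module.End.mul_apply, ih w, hL, hsmul_apply, smul_smul, ← pow_add,
        show s + m * s = (m + 1) * s by ring]
  have haev : ∀ (q : Polynomial k) (w : M),
      (Polynomial.aeval L q) w
        = ∑ j ∈ Finset.range (q.natDegree + 1), q.coeff j • D.x ^ (j * s) • w := by
    intro q w
    rw [Polynomial.aeval_eq_sum_range]
    simp only [LinearMap.sum_apply, LinearMap.smul_apply]
    exact Finset.sum_congr rfl fun j _ => by rw [hLpow]
  have hfv : (Polynomial.aeval L f) v = 0 := by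
    have h1 : (Polynomial.aeval L f) v
        = (L ^ n) v - ∑ j ∈ Finset.range n, α j • (L ^ j) v := by
      rw [hf, map_sub, map_pow, Polynomial.aeval_X, map_sum]
      rw [LinearMap.sub_apply, LinearMap.sum_apply]
      congr 1
      refine Finset.sum_congr rfl fun j _ => ?_
      rw [map_mul, Polynomial.aeval_C, map_pow, Polynomial.aeval_X,
        Module.End.mul_apply, Module.algebraMap_end_apply]
    have h2 : ∀ j : ℕ, (L ^ j) v = xp (j * s) := fun j => hLpow j v
    rw [h1]
    simp only [h2]
    rw [show n * s = N from hn.symm, hrel2, sub_self]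
  have hfirr : Irreducible f := by
    constructor
    · exact Polynomial.not_isUnit_of_natDegree_pos f (by rw [hfdeg]; omega)
    · rintro p q hpq
      by_contra hcon
      push_neg at hcon
      obtain ⟨hpu, hqu⟩ := hcon
      have hf0 : f ≠ 0 := hfmon.ne_zero
      have hp0 : p ≠ 0 := fun h => hf0 (by rw [hpq, h, zero_mul])
      have hq0 : q ≠ 0 := fun h => hf0 (by rw [hpq, h, mul_zero])
      set p₁ := p * Polynomial.C (p.leadingCoeff)⁻¹ with hp₁def
      set q₁ := q * Polynomial.C (q.leadingCoeff)⁻¹ with hq₁def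
      have hp₁ : p₁.Monic := Polynomial.monic_mul_leadingCoeff_inv hp0
      have hq₁ : q₁.Monic := Polynomial.monic_mul_leadingCoeff_inv hq0
      have hlc : p.leadingCoeff * q.leadingCoeff = 1 := by
        have hm := hfmon
        rw [Polynomial.Monic, hpq, Polynomial.leadingCoeff_mul] at hm
        exact hm
      have hfactor : f = p₁ * q₁ := by
        rw [hp₁def, hq₁def]
        calc f = (p * q) * Polynomial.C ((p.leadingCoeff * q.leadingCoeff)⁻¹) := by
              rw [hlc]; simp [hpq]
          _ = p * Polynomial.C (p.leadingCoeff)⁻¹ * (q * Polynomial.C (q.leadingCoeff)⁻¹) := by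
              rw [mul_inv, Polynomial.C_mul]; ring
      set dp := p₁.natDegree with hdp
      set dq := q₁.natDegree with hdq
      have hdpq : dp + dq = n := by
        rw [← hfdeg, hfactor, Polynomial.natDegree_mul hp₁.ne_zero hq₁.ne_zero]
      have hdeg_eq : ∀ (r : Polynomial k), r ≠ 0 → ¬ IsUnit r → 1 ≤ (r * Polynomial.C (r.leadingCoeff)⁻¹).natDegree := by
        intro r hr0 hru
        rw [Polynomial.natDegree_mul_C
          (inv_ne_zero (Polynomial.leadingCoeff_ne_zero.mpr hr0))]
        by_contra hlt
        push_neg at hlt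
        have h0 : r.natDegree = 0 := by omega
        obtain ⟨a, rfl⟩ := Polynomial.natDegree_eq_zero.mp h0
        exact hru (Polynomial.isUnit_C.mpr
          (IsUnit.mk0 a (fun h => hr0 (by rw [h, map_zero]))))
      have hdp1 : 1 ≤ dp := hdeg_eq p hp0 hpu
      have hdq1 : 1 ≤ dq := hdeg_eq q hq0 hqu
      set w : M := (Polynomial.aeval L q₁) v with hwdef
      have hqw : w = ∑ j ∈ Finset.range (dq + 1), q₁.coeff j • xp (j * s) := haev q₁ v
      have hdqn : dq < n := by omega
      have hdpn : dp < n := by omega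
      have hdqsN : dq * s < N := by rw [hn]; exact (Nat.mul_lt_mul_right hs0).mpr hdqn
      have hdpsN : dp * s < N := by rw [hn]; exact (Nat.mul_lt_mul_right hs0).mpr hdpn
      have hN0' : 0 < N := by omega
      set e : ℕ → Fin N := fun m => ⟨m % N, Nat.mod_lt _ hN0'⟩ with he
      have hev : ∀ m, m < N → (e m : ℕ) = m := fun m hm => Nat.mod_eq_of_lt hm
      have hxpb : ∀ m, m < N → xp m = b (e m) := by
        intro m hm
        rw [hb, hev m hm]
      have hw0 : w ≠ 0 := by
        intro hweq
        have hrepr2 : b.repr w (e (dq * s)) = 1 := by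
          rw [hqw, map_sum]
          rw [Finsupp.finset_sum_apply]
          have hterm : ∀ j ∈ Finset.range (dq + 1),
              (b.repr (q₁.coeff j • xp (j * s))) (e (dq * s))
                = if j = dq then 1 else 0 := by
            intro j hj
            have hjdq : j ≤ dq := Nat.lt_succ_iff.mp (Finset.mem_range.mp hj)
            have hjs : j * s < N :=
              lt_of_le_of_lt (Nat.mul_le_mul_right s hjdq) (by omega)
            have hjs' : j * s ≤ dq * s := Nat.mul_le_mul_right s hjdq
            rw [hxpb _ hjs, map_smul, Module.Basis.repr_self,
              Finsupp.smul_apply, Finsupp.single_apply]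
            by_cases hjd : j = dq
            · subst hjd
              rw [if_pos rfl, if_pos rfl]
              simp [hdq, hq₁.coeff_natDegree]
            · rw [if_neg, if_neg hjd]
              · simp
              · intro hcontra
                apply hjd
                have hval := congrArg (fun z : Fin N => (z : ℕ)) hcontra
                simp only [he] at hval
                rw [Nat.mod_eq_of_lt hjs, Nat.mod_eq_of_lt hdqsN] at hval
                exact Nat.eq_of_mul_eq_mul_right hs0 hval
          rw [Finset.sum_congr rfl hterm, Finset.sum_ite_eq' _ dq]
          rw [if_pos (Finset.mem_range.mpr (Nat.lt_succ_self dq))]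
        rw [hweq] at hrepr2
        simp at hrepr2
      have hweightw : ∀ g : G, D.ι g • w = (lam g : k) • w := by
        intro g
        rw [hqw]
        rw [show D.ι g • (∑ j ∈ Finset.range (dq + 1), q₁.coeff j • xp (j * s))
              = hsmul (k := k) (D.ι g)
                  (∑ j ∈ Finset.range (dq + 1), q₁.coeff j • xp (j * s)) from rfl,
          map_sum, Finset.smul_sum]
        refine Finset.sum_congr rfl fun j _ => ?_
        rw [map_smul, hsmul_apply]
        show q₁.coeff j • (D.ι g • (D.x ^ (j * s) • v)) = _
        rw [weight_pow D hlam]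
        rw [smul_smul, smul_smul]
        congr 1
        have hχjs : (D.χ g : k) ^ (j * s) = 1 := by
          rw [mul_comm, pow_mul, hχs, one_pow]
        rw [hχjs]
        ring
      have hpw : (Polynomial.aeval L p₁) w = 0 := by
        rw [hwdef, ← Module.End.mul_apply, ← map_mul, ← hfactor, hfv]
      have hxdp : D.x ^ (dp * s) • w
          = ∑ j ∈ Finset.range dp, (-(p₁.coeff j)) • D.x ^ (j * s) • w := by
        have h1 := haev p₁ w
        rw [hpw] at h1
        rw [Finset.sum_range_succ, hp₁.coeff_natDegree, one_smul] at h1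
        have h2 := eq_neg_of_add_eq_zero_right h1.symm
        rw [h2, ← Finset.sum_neg_distrib]
        exact Finset.sum_congr rfl fun j _ => (neg_smul _ _).symm
      set U := Submodule.span k (Set.range fun i : Fin (dp * s) => D.x ^ (i : ℕ) • w)
        with hU
      have hdps0 : 0 < dp * s := Nat.mul_pos (by omega) hs0
      have hUgen : ∀ m, m < dp * s → D.x ^ m • w ∈ U :=
        fun m hm => Submodule.subset_span ⟨⟨m, hm⟩, rfl⟩
      have hUx : ∀ u ∈ U, D.x • u ∈ U := by
        have := span_stable (k := k) (f := hsmul (k := k) D.x)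
          (S := Set.range fun i : Fin (dp * s) => D.x ^ (i : ℕ) • w) ?_
        · exact this
        · rintro _ ⟨i, rfl⟩
          rw [hsmul_apply, ← xpow_succ_smul]
          rcases Nat.lt_or_ge ((i : ℕ) + 1) (dp * s) with h | h
          · exact hUgen _ h
          · have h' : (i : ℕ) + 1 = dp * s := by have := i.isLt; omega
            rw [h', hxdp]
            refine Submodule.sum_mem _ fun j hj => ?_
            refine Submodule.smul_mem _ _ (hUgen _ ?_)
            exact (Nat.mul_lt_mul_right hs0).mpr (Finset.mem_range.mp hj)
      have hallw : ∀ m, D.x ^ m • w ∈ U := by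
        intro m
        induction m using Nat.strong_induction_on with
        | _ m ih =>
          rcases Nat.lt_or_ge m (dp * s) with h | h
          · exact hUgen _ h
          · have hm0 : m ≠ 0 := by omega
            obtain ⟨m', rfl⟩ := Nat.exists_eq_succ_of_ne_zero hm0
            rw [xpow_succ_smul]
            exact hUx _ (ih m' (Nat.lt_succ_self m'))
      have hcycU : cyc D w ≤ U := by
        rw [cyc, Submodule.span_le]
        rintro _ ⟨i, rfl⟩
        exact hallw i
      rcases hs.1.2 (toHSub (k := k) D (cyc D w) (cyc_x_stable D w)
          (cyc_g_stable D hweightw)) with h | h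
      · have hmem : w ∈ toHSub (k := k) D (cyc D w) (cyc_x_stable D w)
            (cyc_g_stable D hweightw) := (mem_toHSub D).mpr (self_mem_cyc D w)
        rw [h] at hmem
        exact hw0 (by simpa using hmem)
      · have hUtop : U = ⊤ := by
          rw [Submodule.eq_top_iff']
          intro z
          have hz : z ∈ toHSub (k := k) D (cyc D w) (cyc_x_stable D w)
              (cyc_g_stable D hweightw) := by rw [h]; trivial
          exact hcycU ((mem_toHSub D).mp hz)
        have hle : Module.finrank k M ≤ dp * s := by
          have h1 : Module.finrank k ↥U ≤ dp * s := by
            have h2 := finrank_range_le_card (R := k)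
              (b := fun i : Fin (dp * s) => D.x ^ (i : ℕ) • w)
            simpa [hU, Set.finrank] using h2
          rw [hUtop, finrank_top] at h1
          exact h1
        have : dp * s < N := by omega
        omega
  have hfX : f ≠ Polynomial.X := by
    intro hfXeq
    have hn1' : n = 1 := by rw [← hfdeg, hfXeq, Polynomial.natDegree_X]
    have hi00 : (i₀ : ℕ) = 0 := by
      obtain ⟨t, ht⟩ := hsi i₀ hi₀
      have hiN : (i₀ : ℕ) < N := i₀.isLt
      have hNs : N = s := by rw [hn, hn1', one_mul]
      rcases Nat.eq_zero_or_pos t with h | h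
      · rw [h, Nat.mul_zero] at ht
        exact ht
      · exfalso
        have := Nat.le_mul_of_pos_right s h
        omega
    have h0N : 0 * s < N := by simpa using (by omega : 0 < N)
    have hα0 : α 0 ≠ 0 := by
      have heq : (⟨0 * s, h0N⟩ : Fin N) = i₀ := Fin.ext (by simp [hi00])
      simp only [hα, dif_pos h0N, heq]
      exact hi₀
    have hc0 := hfc 0 (by omega)
    rw [hfXeq, Polynomial.coeff_X_zero] at hc0
    exact hα0 (neg_eq_zero.mp hc0.symm)
  refine ⟨lam, f, hfmon, hfirr, hfX, ?_⟩
  -- assemble the V(λ, f) structure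
  have hNn : f.natDegree * s = N := by rw [hfdeg, ← hn]
  refine ⟨Module.Basis.reindex b (finCongr hNn.symm), xp, ?_, ?_, ?_, ?_⟩
  · intro i
    rw [Module.Basis.reindex_apply, hb]
    simp
  · intro i hi g
    exact weight_pow D hlam i g
  · intro i hi
    exact (xpow_succ_smul D i v).symm
  · have h1 : D.x • xp (f.natDegree * s - 1) = xp N := by
      rw [show f.natDegree * s - 1 = N - 1 by omega]
      simp only [hxp]
      rw [← xpow_succ_smul, show N - 1 + 1 = N by omega]
    rw [h1, hrel2]
    refine Finset.sum_congr (by rw [hfdeg]) fun j hj => ?_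
    rw [Finset.mem_range, hfdeg] at hj
    rw [hfc j hj, neg_neg]
end

section
/- Assume |χ| = s < ∞ and χ⁻¹(a) is a primitive s-th root of unity. Let σ, λ be characters of G and α, β ∈ k. Then V(σ, α) ⊗ V(λ, β) ≅ ⊕_{t=0}^{s-1} V(χ^t σλ, α·λ(a)^s + β) as H-modules. -/
open scoped TensorProduct

section AuxAct
variable (k : Type*) {H : Type*} [Field k] [Ring H] [Algebra k H]
variable {V : Type*} [AddCommGroup V] [Module k V] [Module H V] [IsScalarTower k H V]

theorem hsmul_comm' (h : H) (c : k) (v : V) : h • (c • v) = c • (h • v) := by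
  rw [← IsScalarTower.algebraMap_smul H c v, ← mul_smul, ← Algebra.commutes c h, mul_smul,
    IsScalarTower.algebraMap_smul H c (h • v)]

/-- action of `h : H` as a `k`-linear endomorphism -/
def actL (h : H) : V →ₗ[k] V where
  toFun v := h • v
  map_add' := smul_add h
  map_smul' c v := hsmul_comm' k h c v

@[simp] theorem actL_apply (h : H) (v : V) : actL k h v = h • v := rfl

end AuxAct

section QBinom
variable {k : Type*} [Field k]

/-- Gaussian binomial coefficients via the Pascal-type recurrence. -/
noncomputable def qc (Q : k) : ℕ → ℕ → k
  | _, 0 => 1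
  | 0, _ + 1 => 0
  | n + 1, j + 1 => qc Q n j + Q ^ (j + 1) * qc Q n (j + 1)

variable (Q : k)

@[simp] theorem qc_zero_right (n : ℕ) : qc Q n 0 = 1 := by cases n <;> rfl

@[simp] theorem qc_zero_succ (j : ℕ) : qc Q 0 (j + 1) = 0 := by simp [qc]

theorem qc_succ_succ (n j : ℕ) :
    qc Q (n + 1) (j + 1) = qc Q n j + Q ^ (j + 1) * qc Q n (j + 1) := rfl

theorem qc_eq_zero_of_lt : ∀ {n j : ℕ}, n < j → qc Q n j = 0 := by
  intro n
  induction n with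
  | zero => intro j hj; match j, hj with | (j+1), _ => simp
  | succ n ih =>
    intro j hj
    match j, hj with
    | (j+1), hj =>
      rw [qc_succ_succ, ih (by omega), ih (by omega), mul_zero, add_zero]

@[simp] theorem qc_self : ∀ n : ℕ, qc Q n n = 1 := by
  intro n
  induction n with
  | zero => rfl
  | succ n ih => rw [qc_succ_succ, ih, qc_eq_zero_of_lt Q (by omega), mul_zero, add_zero]

/-- the second (symmetric) Pascal recurrence -/
theorem qc_rec2 : ∀ n j : ℕ, qc Q (n + 1) (j + 1) = Q ^ (n - j) * qc Q n j + qc Q n (j + 1) := by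
  intro n
  induction n with
  | zero =>
    intro j
    cases j with
    | zero =>
      show qc Q 1 1 = Q ^ 0 * qc Q 0 0 + qc Q 0 1
      rw [qc_succ_succ]
      simp
    | succ j =>
      show qc Q 1 (j+2) = Q ^ (0 - (j+1)) * qc Q 0 (j+1) + qc Q 0 (j+2)
      rw [qc_succ_succ Q 0 (j+1)]
      simp only [qc_zero_succ]
      ring
  | succ n ih =>
    intro j
    cases j with
    | zero =>
      have h1 : qc Q (n + 1) 1 = Q ^ n * qc Q n 0 + qc Q n 1 := ih 0
      have h3 : qc Q (n + 1 + 1) 1 = qc Q (n+1) 0 + Q ^ 1 * qc Q (n+1) 1 := qc_succ_succ Q (n+1) 0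
      have h2 : qc Q (n + 1) 1 = qc Q n 0 + Q ^ 1 * qc Q n 1 := qc_succ_succ Q n 0
      simp only [qc_zero_right, mul_one] at h1 h2 h3
      show qc Q (n + 1 + 1) 1 = Q ^ (n + 1 - 0) * qc Q (n + 1) 0 + qc Q (n + 1) 1
      rw [Nat.sub_zero, qc_zero_right, mul_one, h3]
      linear_combination Q * h1 - h2
    | succ j =>
      have e1 : qc Q (n + 1) (j + 1) = qc Q n j + Q ^ (j + 1) * qc Q n (j + 1) :=
        qc_succ_succ Q n j
      have e2 : qc Q (n + 1) (j + 1 + 1) = qc Q n (j + 1) + Q ^ (j + 1 + 1) * qc Q n (j + 1 + 1) :=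
        qc_succ_succ Q n (j + 1)
      have i1 : qc Q (n + 1) (j + 1) = Q ^ (n - j) * qc Q n j + qc Q n (j + 1) := ih j
      have i2 : qc Q (n + 1) (j + 1 + 1)
          = Q ^ (n - (j+1)) * qc Q n (j + 1) + qc Q n (j + 1 + 1) := ih (j + 1)
      rw [qc_succ_succ Q (n+1) (j+1), show n + 1 - (j + 1) = n - j from Nat.succ_sub_succ n j]
      by_cases hjn : j + 1 ≤ n
      · have hP : Q ^ (n - j) = Q * Q ^ (n - (j+1)) := by
          rw [← pow_succ']; congr 1; omega
        have rA : (Q ^ (n-j) - 1) * qc Q n j = (Q ^ (j+1) - 1) * qc Q n (j+1) := by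
          linear_combination e1 - i1
        have rB : (Q ^ (n-(j+1)) - 1) * qc Q n (j+1)
            = (Q ^ (j+1+1) - 1) * qc Q n (j+1+1) := by
          linear_combination e2 - i2
        rw [e1, e2, hP]
        rw [hP] at rA
        linear_combination (-1 : k) * rA - Q ^ (j+1+1) * rB
      · by_cases hjn2 : j = n
        · subst hjn2
          have hX2 : qc Q (j+1) (j+1+1) = 0 := qc_eq_zero_of_lt Q (by omega)
          rw [hX2, Nat.sub_self, pow_zero, one_mul, mul_zero, add_zero]
        · have hX1 : qc Q (n+1) (j+1) = 0 := qc_eq_zero_of_lt Q (by omega)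
          have hX2 : qc Q (n+1) (j+1+1) = 0 := qc_eq_zero_of_lt Q (by omega)
          rw [hX1, hX2]
          ring

/-- vanishing of the Gaussian binomials at a primitive root of unity -/
theorem qc_eq_zero_at_root {s : ℕ} (hQs : Q ^ s = 1)
    (hQne : ∀ j : ℕ, 0 < j → j < s → Q ^ j ≠ 1) :
    ∀ j : ℕ, 0 < j → j < s → qc Q s j = 0 := by
  intro j hj0 hjs
  obtain ⟨n, rfl⟩ : ∃ n, s = n + 1 := ⟨s - 1, by omega⟩
  obtain ⟨i, rfl⟩ : ∃ i, j = i + 1 := ⟨j - 1, by omega⟩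
  have e1 : qc Q (n + 1) (i + 1) = qc Q n i + Q ^ (i + 1) * qc Q n (i + 1) := qc_succ_succ Q n i
  have e2 : qc Q (n + 1) (i + 1) = Q ^ (n - i) * qc Q n i + qc Q n (i + 1) := qc_rec2 Q n i
  have key : (1 - Q ^ (n - i)) * qc Q n i = (1 - Q ^ (i + 1)) * qc Q n (i + 1) := by
    linear_combination e2 - e1
  have hne : (1 : k) - Q ^ (n - i) ≠ 0 := by
    intro h
    exact hQne (n - i) (by omega) (by omega) (by linear_combination -h)
  have hQQ : Q ^ (i + 1) * Q ^ (n - i) = 1 := by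
    rw [← pow_add, show i + 1 + (n - i) = n + 1 from by omega, hQs]
  have hz : (1 - Q ^ (n - i)) * qc Q (n + 1) (i + 1) = 0 := by
    rw [e1]
    linear_combination key - qc Q n (i+1) * hQQ
  exact (mul_eq_zero.mp hz).resolve_left hne

/-- q-binomial expansion for q-commuting elements of a `k`-algebra. -/
theorem qbinom_expand {R : Type*} [Ring R] [Algebra k R] (A B : R)
    (hco : B * A = Q • (A * B)) (n : ℕ) :
    (A + B) ^ n = ∑ j ∈ Finset.range (n + 1), qc Q n j • (A ^ j * B ^ (n - j)) := by
  have hBA2 : ∀ m : ℕ, B ^ m * A = Q ^ m • (A * B ^ m) := by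
    intro m
    induction m with
    | zero => simp
    | succ m ih =>
      rw [pow_succ, mul_assoc, hco, mul_smul_comm, ← mul_assoc, ih, smul_mul_assoc, smul_smul,
        ← pow_succ', mul_assoc A (B^m) B]
  induction n with
  | zero => simp
  | succ n ih =>
    have step : ∀ j ∈ Finset.range (n + 1),
        qc Q n j • (A ^ j * B ^ (n - j)) * (A + B)
        = (Q ^ (n-j) * qc Q n j) • (A ^ (j+1) * B ^ (n - j))
          + qc Q n j • (A ^ j * B ^ (n + 1 - j)) := by
      intro j hj
      rw [Finset.mem_range] at hj
      rw [smul_mul_assoc, mul_add, mul_assoc (A^j) (B^(n-j)) A, hBA2 (n - j), mul_smul_comm,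
        smul_add, smul_smul, mul_comm (qc Q n j) (Q ^ (n-j)), ← mul_assoc (A^j) A (B^(n-j)),
        ← pow_succ A j, mul_assoc (A^j) (B^(n-j)) B, ← pow_succ B (n-j),
        show n + 1 - j = (n - j) + 1 from by omega]
    have hsum2 : ∑ j ∈ Finset.range (n+1), qc Q n j • (A ^ j * B ^ (n + 1 - j))
        = B ^ (n+1) + ∑ i ∈ Finset.range (n+1), qc Q n (i+1) • (A ^ (i+1) * B ^ (n - i)) := by
      rw [Finset.sum_range_succ' (fun j => qc Q n j • (A ^ j * B ^ (n + 1 - j)))]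
      rw [Finset.sum_range_succ (fun i => qc Q n (i+1) • (A ^ (i+1) * B ^ (n - i)))]
      rw [qc_eq_zero_of_lt Q (by omega : n < n + 1), zero_smul, add_zero]
      simp only [Nat.succ_sub_succ, pow_zero, one_mul, qc_zero_right, one_smul, Nat.sub_zero]
      rw [add_comm]
    have htarget : ∑ j ∈ Finset.range (n+1+1), qc Q (n+1) j • (A ^ j * B ^ (n+1-j))
        = B^(n+1) + ∑ i ∈ Finset.range (n+1),
            (Q^(n-i) * qc Q n i + qc Q n (i+1)) • (A^(i+1) * B^(n-i)) := by
      rw [Finset.sum_range_succ' (fun j => qc Q (n+1) j • (A ^ j * B ^ (n+1-j)))]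
      simp only [Nat.succ_sub_succ, pow_zero, one_mul, qc_zero_right, one_smul, Nat.sub_zero]
      rw [add_comm]
      congr 1
      refine Finset.sum_congr rfl fun i _ => ?_
      rw [qc_rec2 Q n i]
    have hmerge : ∑ i ∈ Finset.range (n+1),
          (Q^(n-i) * qc Q n i + qc Q n (i+1)) • (A^(i+1) * B^(n-i))
        = (∑ i ∈ Finset.range (n+1), (Q^(n-i) * qc Q n i) • (A^(i+1) * B^(n-i)))
          + ∑ i ∈ Finset.range (n+1), qc Q n (i+1) • (A^(i+1) * B^(n-i)) := by
      rw [← Finset.sum_add_distrib]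
      exact Finset.sum_congr rfl fun i _ => add_smul _ _ _
    rw [pow_succ, ih, Finset.sum_mul, Finset.sum_congr rfl step, Finset.sum_add_distrib, hsum2,
      htarget, hmerge]
    abel

end QBinom

section Eigen
variable {K V : Type*} [Field K] [AddCommGroup V] [Module K V]

theorem pow_eig (f : V →ₗ[K] V) (c : K) (v : V) (h : f v = c • v) :
    ∀ p : ℕ, (f ^ p) v = c ^ p • v := by
  intro p
  induction p with
  | zero => simp
  | succ p ih => rw [pow_succ', Module.End.mul_apply, ih, map_smul, h, smul_smul, ← pow_succ]

theorem eigen_sum_zero {ι : Type*} (e : V →ₗ[K] V) (θ : ι → K)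
    (hinj : Function.Injective θ) :
    ∀ (F : Finset ι) (z : ι → V), (∀ i, e (z i) = θ i • z i) → (∑ i ∈ F, z i = 0) →
      ∀ i ∈ F, z i = 0 := by
  classical
  intro F
  induction F using Finset.induction_on with
  | empty => intro z _ _ i hi; exact absurd hi (Finset.notMem_empty i)
  | @insert j F hj ih =>
    intro z hz hsum i hi
    set z' : ι → V := fun i => (θ i - θ j) • z i with hz'
    have hz'sum : ∑ i' ∈ F, z' i' = 0 := by
      have h2 : ∑ i' ∈ insert j F, z' i'
          = e (∑ i' ∈ insert j F, z i') - θ j • ∑ i' ∈ insert j F, z i' := by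
        rw [map_sum, Finset.smul_sum, ← Finset.sum_sub_distrib]
        refine Finset.sum_congr rfl fun i' _ => ?_
        rw [hz i', ← sub_smul]
      rw [hsum, map_zero, smul_zero, sub_zero, Finset.sum_insert hj] at h2
      have hzj : z' j = 0 := by simp [hz']
      rwa [hzj, zero_add] at h2
    have hz'eig : ∀ i', e (z' i') = θ i' • z' i' := by
      intro i'
      rw [hz']
      simp only []
      rw [map_smul, hz i', smul_comm]
    have hF : ∀ i' ∈ F, z' i' = 0 := ih z' hz'eig hz'sum
    have hzF : ∀ i' ∈ F, z i' = 0 := by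
      intro i' hi'F
      have hne : θ i' - θ j ≠ 0 := sub_ne_zero.mpr fun h => hj (hinj h ▸ hi'F)
      exact (smul_eq_zero.mp (hF i' hi'F)).resolve_left hne
    rcases Finset.mem_insert.mp hi with rfl | hiF
    · have hs : z i + ∑ i' ∈ F, z i' = 0 := by rwa [Finset.sum_insert hj] at hsum
      rwa [Finset.sum_eq_zero hzF, add_zero] at hs
    · exact hzF i hiF

end Eigen



section NatMod

theorem natmod1 {s r t : ℕ} (h1 : r < s) (h3 : t ≤ r) : (r + s - t) % s = r - t := by
  rw [show r + s - t = (r - t) + s from by omega, Nat.add_mod_right, Nat.mod_eq_of_lt (by omega)]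

theorem natmod2 {s r t : ℕ} (h1 : r < s) (h2 : t < s) (h3 : r < t) :
    (r + s - t) % s = r + s - t :=
  Nat.mod_eq_of_lt (by omega)

theorem natmod3 {s t i : ℕ} (h2 : t < s) (h3 : i < s) : ((t + i) % s + s - t) % s = i := by
  by_cases h : t + i < s
  · rw [Nat.mod_eq_of_lt h, show t + i + s - t = i + s from by omega, Nat.add_mod_right,
      Nat.mod_eq_of_lt h3]
  · have hmod : (t + i) % s = t + i - s := by
      rw [Nat.mod_eq_sub_mod (by omega)]
      exact Nat.mod_eq_of_lt (by omega)
    rw [hmod, show t + i - s + s - t = i from by omega, Nat.mod_eq_of_lt h3]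

theorem natmod4 {s r t : ℕ} (h1 : r < s) (h2 : t < s) : (t + (r + s - t) % s) % s = r := by
  by_cases h : t ≤ r
  · rw [natmod1 h1 h, show t + (r - t) = r from by omega, Nat.mod_eq_of_lt h1]
  · rw [natmod2 h1 h2 (by omega), show t + (r + s - t) = r + s from by omega, Nat.add_mod_right,
      Nat.mod_eq_of_lt h1]

end NatMod

variable {k G H : Type*} [Field k] [Group G] [Ring H] [Algebra k H]

/-- `M` realizes the `s`-dimensional module `V(λ, β) = M(λ)/((x^s - β)·M(λ))`: it has a
`k`-basis `m_0, …, m_{s-1}` with `g • m_i = χ(g)^i λ(g) • m_i`, `x • m_i = m_{i+1}`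
for `i < s - 1`, and `x • m_{s-1} = β • m_0`. -/
def IsVBeta (D : HopfOreExt k G H) (lam : G →* kˣ) (s : ℕ) (β : k)
    (M : Type*) [AddCommGroup M] [Module k M] [Module H M] [IsScalarTower k H M] : Prop :=
  ∃ (b : Module.Basis (Fin s) k M) (m : ℕ → M),
    (∀ i : Fin s, m (i : ℕ) = b i) ∧
    (∀ i < s, ∀ g : G, D.ι g • m i = ((D.χ g : k) ^ i * (lam g : k)) • m i) ∧
    (∀ i : ℕ, i + 1 < s → D.x • m i = m (i + 1)) ∧
    D.x • m (s - 1) = β • m 0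

set_option maxHeartbeats 3200000 in
/-- Assume `|χ| = s < ∞` and `χ⁻¹(a)` is a primitive `s`-th root of unity. If `T` carries
the tensor-product `H`-module structure of `V(σ, α) ⊗ V(λ, β)` (via the comultiplication),
then `T ≅ ⊕_{t=0}^{s-1} V(χ^t σ λ, α λ(a)^s + β)`: `T` is an internal direct sum of `s`
submodules, the `t`-th realizing `V(χ^t σ λ, α λ(a)^s + β)`. -/
theorem vbeta_tensor_decomposition (D : HopfOreExt k G H) (s : ℕ)
    (hs : orderOf D.χ = s) (hs0 : 0 < s)
    (hprim : IsPrimitiveRoot ((D.χ D.a : k)⁻¹) s)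
    (sig lam : G →* kˣ) (α β : k)
    (M N T : Type*) [AddCommGroup M] [Module k M] [Module H M] [IsScalarTower k H M]
    [AddCommGroup N] [Module k N] [Module H N] [IsScalarTower k H N]
    [AddCommGroup T] [Module k T] [Module H T] [IsScalarTower k H T]
    (hM : IsVBeta D sig s α M) (hN : IsVBeta D lam s β N)
    (μ : M →ₗ[k] N →ₗ[k] T)
    (hbij : Function.Bijective (TensorProduct.lift μ))
    (hg : ∀ (g : G) (v : M) (w : N), D.ι g • μ v w = μ (D.ι g • v) (D.ι g • w))
    (hx : ∀ (v : M) (w : N),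
      D.x • μ v w = μ (D.x • v) (D.ι D.a • w) + μ v (D.x • w)) :
    ∃ W : Fin s → Submodule H T,
      DirectSum.IsInternal W ∧
      ∀ t : Fin s,
        IsVBeta D (D.χ ^ (t : ℕ) * sig * lam) s (α * (lam D.a : k) ^ s + β) (W t) := by
  
  classical
  obtain ⟨bM, m, hmb, hmg, hmx, hmlast⟩ := hM
  obtain ⟨bN, n, hnb, hng, hnx, hnlast⟩ := hN
  -- scalars
  have hq0 : (D.χ D.a : k) ≠ 0 := Units.ne_zero _
  set q : k := (D.χ D.a : k) with hq_def
  set Q : k := q⁻¹ with hQ_def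
  have hprimQ : IsPrimitiveRoot Q s := hprim
  have hQs : Q ^ s = 1 := hprimQ.pow_eq_one
  have hqs : q ^ s = 1 := by
    have h := hQs
    rwa [hQ_def, inv_pow, inv_eq_one] at h
  have hqprim : IsPrimitiveRoot q s := by
    have h := hprimQ.inv
    rwa [hQ_def, inv_inv] at h
  have hQne : ∀ j : ℕ, 0 < j → j < s → Q ^ j ≠ 1 :=
    fun j h1 h2 => hprimQ.pow_ne_one_of_pos_of_lt (by omega) h2
  have hpowmod : ∀ c : k, c ^ s = 1 → ∀ e : ℕ, c ^ e = c ^ (e % s) := by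
    intro c hc e
    conv_lhs => rw [← Nat.div_add_mod e s]
    rw [pow_add, pow_mul, hc, one_pow, one_mul]
  have hχs : ∀ g0 : G, (D.χ g0 : k) ^ s = 1 := by
    intro g0
    have h1 : D.χ ^ s = 1 := by rw [← hs]; exact pow_orderOf_eq_one D.χ
    have h2 : (D.χ g0) ^ s = 1 := by
      have := congrArg (fun φ => φ g0) h1
      simpa using this
    calc (D.χ g0 : k) ^ s = ((D.χ g0 ^ s : kˣ) : k) := by rw [Units.val_pow_eq_pow_val]
      _ = ((1 : kˣ) : k) := by rw [h2]
      _ = 1 := Units.val_one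
  -- the transported tensor structure
  set eT : (M ⊗[k] N) ≃ₗ[k] T := LinearEquiv.ofBijective (TensorProduct.lift μ) hbij
    with heT_def
  have heT : ∀ (v : M) (w : N), eT (v ⊗ₜ[k] w) = μ v w := by
    intro v w
    rw [heT_def]
    simp
  set xM : M →ₗ[k] M := actL k D.x with hxM_def
  set xN : N →ₗ[k] N := actL k D.x with hxN_def
  set aN : N →ₗ[k] N := actL k (D.ι D.a) with haN_def
  set X : T →ₗ[k] T := actL k D.x with hX_def
  set Eop : T →ₗ[k] T := actL k (D.ι D.a) with hEop_def
  have hEop_app : ∀ u : T, Eop u = D.ι D.a • u := fun u => rfl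
  set AA : T →ₗ[k] T := eT.toLinearMap ∘ₗ (TensorProduct.map xM aN) ∘ₗ eT.symm.toLinearMap
    with hAA_def
  set BB : T →ₗ[k] T := eT.toLinearMap ∘ₗ (TensorProduct.map LinearMap.id xN) ∘ₗ
    eT.symm.toLinearMap with hBB_def
  have hconj : ∀ (f : M ⊗[k] N →ₗ[k] M ⊗[k] N) (p : ℕ),
      (eT.toLinearMap ∘ₗ f ∘ₗ eT.symm.toLinearMap) ^ p
        = eT.toLinearMap ∘ₗ (f ^ p) ∘ₗ eT.symm.toLinearMap := by
    intro f p
    induction p with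
    | zero =>
      ext u
      simp
    | succ p ih =>
      rw [pow_succ, pow_succ, ih]
      ext u
      simp
  have hAAp : ∀ (p : ℕ) (v : M) (w : N), ((AA ^ p)) (μ v w) = μ ((xM ^ p) v) ((aN ^ p) w) := by
    intro p v w
    have hsymm : eT.symm ((μ v) w) = v ⊗ₜ[k] w := by
      rw [← heT v w, LinearEquiv.symm_apply_apply]
    rw [hAA_def, hconj _ p, TensorProduct.map_pow]
    simp only [LinearMap.coe_comp, LinearEquiv.coe_coe, Function.comp_apply]
    rw [hsymm, TensorProduct.map_tmul, heT]
  have hBBp : ∀ (p : ℕ) (v : M) (w : N), ((BB ^ p)) (μ v w) = μ v ((xN ^ p) w) := by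
    intro p v w
    have hsymm : eT.symm ((μ v) w) = v ⊗ₜ[k] w := by
      rw [← heT v w, LinearEquiv.symm_apply_apply]
    have hid : (LinearMap.id : M →ₗ[k] M) ^ p = LinearMap.id := by
      induction p with
      | zero => rfl
      | succ p ih => rw [pow_succ, ih]; rfl
    rw [hBB_def, hconj _ p, TensorProduct.map_pow, hid]
    simp only [LinearMap.coe_comp, LinearEquiv.coe_coe, Function.comp_apply]
    rw [hsymm, TensorProduct.map_tmul, heT]
    rfl
  have hA1 : ∀ (v : M) (w : N), AA (μ v w) = μ (D.x • v) (D.ι D.a • w) := by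
    intro v w
    have := hAAp 1 v w
    simp only [pow_one] at this
    exact this
  have hB1 : ∀ (v : M) (w : N), BB (μ v w) = μ v (D.x • w) := by
    intro v w
    have := hBBp 1 v w
    simp only [pow_one] at this
    exact this
  have hXAB : ∀ u : T, D.x • u = AA u + BB u := by
    intro u
    obtain ⟨z, rfl⟩ := eT.surjective u
    induction z using TensorProduct.induction_on with
    | zero => simp
    | tmul v w => rw [heT, hx v w, hA1, hB1]
    | add z1 z2 h1 h2 =>
      rw [map_add, smul_add, h1, h2, map_add, map_add]
      abel
  have hXop : X = AA + BB := by
    apply LinearMap.ext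
    intro u
    rw [LinearMap.add_apply]
    exact hXAB u
  have hxa : ∀ w : N, D.x • (D.ι D.a • w) = Q • (D.ι D.a • (D.x • w)) := by
    intro w
    rw [← mul_smul, D.rel D.a, smul_assoc, mul_smul]
  have hcomm : BB * AA = Q • (AA * BB) := by
    apply LinearMap.ext
    intro u
    obtain ⟨z, rfl⟩ := eT.surjective u
    induction z using TensorProduct.induction_on with
    | zero => simp
    | tmul v w =>
      rw [Module.End.mul_apply, LinearMap.smul_apply, Module.End.mul_apply, heT, hA1, hB1, hB1,
        hA1, hxa]
      rw [map_smul]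
    | add z1 z2 h1 h2 =>
      simp only [map_add]
      rw [h1, h2]
  -- powers of x on M and N
  have hmstep : ∀ (j i : ℕ), i + j < s → (xM ^ j) (m i) = m (i + j) := by
    intro j
    induction j with
    | zero => intro i _; simp
    | succ j ih =>
      intro i hij
      rw [pow_succ', Module.End.mul_apply, ih i (by omega)]
      show D.x • m (i + j) = m (i + (j + 1))
      rw [hmx (i + j) (by omega), ← add_assoc]
  have hnstep : ∀ (j i : ℕ), i + j < s → (xN ^ j) (n i) = n (i + j) := by
    intro j
    induction j with
    | zero => intro i _; simp
    | succ j ih =>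
      intro i hij
      rw [pow_succ', Module.End.mul_apply, ih i (by omega)]
      show D.x • n (i + j) = n (i + (j + 1))
      rw [hnx (i + j) (by omega), ← add_assoc]
  have hxMs : ∀ i : ℕ, i < s → (xM ^ s) (m i) = α • m i := by
    intro i hi
    have hsplit : xM ^ s = (xM ^ i) * (xM * (xM ^ (s - 1 - i))) := by
      rw [← pow_succ', ← pow_add]
      congr 1
      omega
    rw [hsplit, Module.End.mul_apply, Module.End.mul_apply, hmstep (s - 1 - i) i (by omega),
      show i + (s - 1 - i) = s - 1 from by omega]
    show (xM ^ i) (D.x • m (s - 1)) = α • m i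
    rw [hmlast, map_smul, hmstep i 0 (by omega), Nat.zero_add]
  have hxNs : ∀ i : ℕ, i < s → (xN ^ s) (n i) = β • n i := by
    intro i hi
    have hsplit : xN ^ s = (xN ^ i) * (xN * (xN ^ (s - 1 - i))) := by
      rw [← pow_succ', ← pow_add]
      congr 1
      omega
    rw [hsplit, Module.End.mul_apply, Module.End.mul_apply, hnstep (s - 1 - i) i (by omega),
      show i + (s - 1 - i) = s - 1 from by omega]
    show (xN ^ i) (D.x • n (s - 1)) = β • n i
    rw [hnlast, map_smul, hnstep i 0 (by omega), Nat.zero_add]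
  have haNeig : ∀ j : ℕ, j < s → aN (n j) = (q ^ j * (lam D.a : k)) • n j := by
    intro j hj
    show D.ι D.a • n j = (q ^ j * (lam D.a : k)) • n j
    exact hng j hj D.a
  have haNs : ∀ j : ℕ, j < s → (aN ^ s) (n j) = ((lam D.a : k) ^ s) • n j := by
    intro j hj
    rw [pow_eig aN (q ^ j * (lam D.a : k)) (n j) (haNeig j hj) s]
    congr 1
    rw [mul_pow, ← pow_mul, mul_comm j s, pow_mul, hqs, one_pow, one_mul]
  -- x^s acts as γ on T
  set γ : k := α * (lam D.a : k) ^ s + β with hγ_def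
  have hxNsE : (xN ^ s : N →ₗ[k] N) = β • LinearMap.id := by
    apply bN.ext
    intro i
    rw [← hnb i, hxNs i i.isLt]
    simp
  have hxMsE : (xM ^ s : M →ₗ[k] M) = α • LinearMap.id := by
    apply bM.ext
    intro i
    rw [← hmb i, hxMs i i.isLt]
    simp
  have haNsE : (aN ^ s : N →ₗ[k] N) = ((lam D.a : k) ^ s) • LinearMap.id := by
    apply bN.ext
    intro i
    rw [← hnb i, haNs i i.isLt]
    simp
  have hBBs_app : ∀ u : T, (BB ^ s) u = β • u := by
    intro u
    obtain ⟨z, rfl⟩ := eT.surjective u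
    induction z using TensorProduct.induction_on with
    | zero => simp
    | tmul v w =>
      rw [heT, hBBp s, hxNsE]
      simp
    | add z1 z2 h1 h2 =>
      rw [map_add, map_add, h1, h2, smul_add]
  have hAAs_app : ∀ u : T, (AA ^ s) u = (α * (lam D.a : k) ^ s) • u := by
    intro u
    obtain ⟨z, rfl⟩ := eT.surjective u
    induction z using TensorProduct.induction_on with
    | zero => simp
    | tmul v w =>
      rw [heT, hAAp s, hxMsE, haNsE]
      simp [smul_smul, mul_comm]
    | add z1 z2 h1 h2 =>
      rw [map_add, map_add, h1, h2, smul_add]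
  have hXs_app : ∀ u : T, (X ^ s) u = γ • u := by
    intro u
    rw [hXop, qbinom_expand Q AA BB hcomm s, LinearMap.sum_apply]
    have hz : ∀ j ∈ Finset.range (s + 1), j ∉ ({0, s} : Finset ℕ) →
        (qc Q s j • (AA ^ j * BB ^ (s - j))) u = 0 := by
      intro j hj hj2
      rw [Finset.mem_range] at hj
      simp only [Finset.mem_insert, Finset.mem_singleton, not_or] at hj2
      rw [LinearMap.smul_apply, qc_eq_zero_at_root Q hQs hQne j (by omega) (by omega), zero_smul]
    have hsub : ({0, s} : Finset ℕ) ⊆ Finset.range (s + 1) := by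
      intro j hj
      simp only [Finset.mem_insert, Finset.mem_singleton] at hj
      rw [Finset.mem_range]
      omega
    rw [← Finset.sum_subset hsub hz, Finset.sum_pair (show (0 : ℕ) ≠ s from by omega)]
    simp only [LinearMap.smul_apply, Module.End.mul_apply, qc_zero_right, qc_self, one_smul,
      pow_zero, Nat.sub_zero, Nat.sub_self, Module.End.one_apply]
    rw [hBBs_app, hAAs_app, hγ_def, add_smul]
    rw [add_comm]
  -- powers of D.x as iterates of X
  have hxpow_smul : ∀ (p : ℕ) (u : T), (D.x ^ p) • u = (X ^ p) u := by
    intro p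
    induction p with
    | zero =>
      intro u
      simp
    | succ p ih =>
      intro u
      rw [pow_succ' X p, Module.End.mul_apply, ← ih u, pow_succ' D.x p, mul_smul]
      rfl
  have hXadd : ∀ (a2 b2 : ℕ) (u : T), (X ^ a2) ((X ^ b2) u) = (X ^ (a2 + b2)) u := by
    intro a2 b2 u
    rw [pow_add, Module.End.mul_apply]
  -- commutation of group action and X
  have hgx : ∀ (g0 : G) (u : T), D.ι g0 • (D.x • u) = (D.χ g0 : k) • (D.x • (D.ι g0 • u)) := by
    intro g0 u
    have h1 : D.ι g0 * D.x = (D.χ g0 : k) • (D.x * D.ι g0) := by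
      rw [D.rel g0, smul_smul, mul_inv_cancel₀ (Units.ne_zero (D.χ g0)), one_smul]
    rw [← mul_smul, h1, smul_assoc, mul_smul]
  have hgXp : ∀ (g0 : G) (p : ℕ) (u : T),
      D.ι g0 • ((X ^ p) u) = ((D.χ g0 : k) ^ p) • ((X ^ p) (D.ι g0 • u)) := by
    intro g0 p
    induction p with
    | zero => intro u; simp
    | succ p ih =>
      intro u
      rw [pow_succ' X p, Module.End.mul_apply, Module.End.mul_apply]
      show D.ι g0 • (D.x • ((X ^ p) u)) = _ • (D.x • ((X ^ p) (D.ι g0 • u)))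
      rw [hgx, ih u, hsmul_comm' k D.x ((D.χ g0 : k) ^ p), smul_smul, ← pow_succ']
  -- weights of the basis vectors
  have hw8 : ∀ (g0 : G) (i j : ℕ), i < s → j < s →
      D.ι g0 • μ (m i) (n j)
        = ((D.χ g0 : k) ^ (i + j) * ((sig g0 : k) * (lam g0 : k))) • μ (m i) (n j) := by
    intro g0 i j hi hj
    rw [hg g0 (m i) (n j), hmg i hi g0, hng j hj g0, map_smul μ, LinearMap.smul_apply,
      map_smul (μ (m i)), smul_smul, pow_add]
    congr 1
    ring
  
  -- basis of T from the tensor basis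
  set bT : Module.Basis (Fin s × Fin s) k T := (bM.tensorProduct bN).map eT with hbT_def
  have hbT : ∀ p : Fin s × Fin s, bT p = μ (m (p.1 : ℕ)) (n (p.2 : ℕ)) := by
    intro p
    obtain ⟨i, j⟩ := p
    rw [hbT_def, Module.Basis.map_apply, Module.Basis.tensorProduct_apply, ← hmb i, ← hnb j, heT]
  -- the eigenvalue function for the action of a
  set θ : Fin s → k := fun r => q ^ (r : ℕ) * ((sig D.a : k) * (lam D.a : k)) with hθ_def
  have hθinj : Function.Injective θ := by
    intro r r' h
    have hc0 : ((sig D.a : k) * (lam D.a : k)) ≠ 0 :=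
      mul_ne_zero (Units.ne_zero _) (Units.ne_zero _)
    rw [hθ_def] at h
    simp only [] at h
    exact Fin.ext (hqprim.pow_inj r.isLt r'.isLt (mul_right_cancel₀ hc0 h))
  -- the key existence statement
  obtain ⟨w, hwt, hind⟩ :
      ∃ w : Fin s → T,
        (∀ (t : Fin s) (g0 : G), D.ι g0 • w t
            = (((sig g0 : k) * (lam g0 : k)) * (D.χ g0 : k) ^ (t : ℕ)) • w t) ∧
        LinearIndependent k (fun p : Fin s × Fin s => (X ^ (p.2 : ℕ)) (w p.1)) := by
    -- reduction to per-weight-class independence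
    have hVind : ∀ w : Fin s → T,
        (∀ (t : Fin s) (g0 : G), D.ι g0 • w t
            = (((sig g0 : k) * (lam g0 : k)) * (D.χ g0 : k) ^ (t : ℕ)) • w t) →
        (∀ (r : Fin s) (c : Fin s → k),
            (∑ t : Fin s, c t • (X ^ (((r : ℕ) + s - (t : ℕ)) % s)) (w t)) = 0 →
              ∀ t, c t = 0) →
        LinearIndependent k (fun p : Fin s × Fin s => (X ^ (p.2 : ℕ)) (w p.1)) := by
      intro w hwt hclass
      have hweig : ∀ (r t : Fin s),
          Eop ((X ^ (((r : ℕ) + s - (t : ℕ)) % s)) (w t))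
            = θ r • (X ^ (((r : ℕ) + s - (t : ℕ)) % s)) (w t) := by
        intro r t
        rw [hEop_app, hgXp D.a _ (w t), hwt t D.a, map_smul, smul_smul, hθ_def]
        congr 1
        have h2 : q ^ ((((r : ℕ) + s - (t : ℕ)) % s) + (t : ℕ)) = q ^ (r : ℕ) := by
          rw [hpowmod q hqs, Nat.add_comm, natmod4 r.isLt t.isLt]
        rw [mul_comm ((sig D.a : k) * (lam D.a : k)) (q ^ (t : ℕ)), ← mul_assoc, ← pow_add, h2]
      set e : Fin s × Fin s ≃ Fin s × Fin s :=
        { toFun := fun p => (⟨((p.1 : ℕ) + (p.2 : ℕ)) % s, Nat.mod_lt _ hs0⟩, p.1)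
          invFun := fun p => (p.2, ⟨((p.1 : ℕ) + s - (p.2 : ℕ)) % s, Nat.mod_lt _ hs0⟩)
          left_inv := fun p => Prod.ext rfl (Fin.ext (natmod3 p.1.isLt p.2.isLt))
          right_inv := fun p => Prod.ext (Fin.ext (natmod4 p.1.isLt p.2.isLt)) rfl } with he_def
      have hVf : (fun p : Fin s × Fin s => (X ^ (p.2 : ℕ)) (w p.1))
          = (fun p : Fin s × Fin s => (X ^ (((p.1 : ℕ) + s - (p.2 : ℕ)) % s)) (w p.2)) ∘ e := by
        funext p
        simp only [Function.comp_apply, he_def, Equiv.coe_fn_mk]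
        rw [natmod3 p.1.isLt p.2.isLt]
      rw [hVf, linearIndependent_equiv e, Fintype.linearIndependent_iff]
      intro gc hsum p
      set z : Fin s → T :=
        fun r => ∑ t : Fin s, gc (r, t) • (X ^ (((r : ℕ) + s - (t : ℕ)) % s)) (w t) with hz_def
      have hzsum : ∑ r : Fin s, z r = 0 := by
        rw [← hsum, Fintype.sum_prod_type]
      have hzeig : ∀ r, Eop (z r) = θ r • z r := by
        intro r
        rw [hz_def]
        simp only []
        rw [map_sum, Finset.smul_sum]
        refine Finset.sum_congr rfl fun t _ => ?_
        rw [map_smul, hweig r t, smul_comm]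
      have hz0 := eigen_sum_zero Eop θ hθinj Finset.univ z hzeig hzsum
      have hc0 : ∀ (r t : Fin s), gc (r, t) = 0 := fun r t =>
        hclass r (fun t' => gc (r, t')) (hz0 r (Finset.mem_univ r)) t
      have := hc0 p.1 p.2
      simpa using this
    by_cases hγ0 : γ = 0
    · -- the nilpotent case
      set w0 : Fin s → T := fun t => μ (m 0) (n (t : ℕ)) with hw0_def
      have hwt0 : ∀ (t : Fin s) (g0 : G), D.ι g0 • w0 t
          = (((sig g0 : k) * (lam g0 : k)) * (D.χ g0 : k) ^ (t : ℕ)) • w0 t := by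
        intro t g0
        rw [hw0_def]
        simp only []
        rw [hw8 g0 0 (t : ℕ) hs0 t.isLt]
        congr 1
        rw [Nat.zero_add]
        ring
      -- x^e = 0 for e ≥ s
      have hXbig : ∀ e2 : ℕ, s ≤ e2 → ∀ u : T, (X ^ e2) u = 0 := by
        intro e2 he2 u
        rw [show e2 = (e2 - s) + s from by omega, ← hXadd, hXs_app, hγ0, zero_smul, map_zero]
      -- nonvanishing of X^(s-1) on w0
      have hXw : ∀ t : Fin s, (X ^ (s - 1)) (w0 t) ≠ 0 := by
        intro t
        have hexp : (X : T →ₗ[k] T) ^ (s - 1)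
            = ∑ j ∈ Finset.range s, qc Q (s - 1) j • ((AA ^ j) * (BB ^ (s - 1 - j))) := by
          rw [hXop, qbinom_expand Q AA BB hcomm (s - 1), show s - 1 + 1 = s from by omega]
        intro h0
        rw [hexp, LinearMap.sum_apply] at h0
        have h2 := congrArg (fun u => (bT.repr u) (⟨s - 1, by omega⟩, t)) h0
        simp only [map_sum, map_zero, Finsupp.coe_finset_sum, Finset.sum_apply, Finsupp.coe_zero,
          Pi.zero_apply] at h2
        have hxNt : ∀ (j : ℕ), j < s → ∃ d : k,
            (xN ^ (s - 1 - j)) (n (t : ℕ)) = d • n (((t : ℕ) + (s - 1 - j)) % s)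
            ∧ ((t : ℕ) ≤ j → d = 1) := by
          intro j hj
          by_cases h : (t : ℕ) + (s - 1 - j) < s
          · refine ⟨1, ?_, fun _ => rfl⟩
            rw [hnstep (s - 1 - j) (t : ℕ) h, one_smul, Nat.mod_eq_of_lt h]
          · refine ⟨β, ?_, fun hle => absurd h (by push_neg at h ⊢; omega)⟩
            have hts : (t : ℕ) < s := t.isLt
            have hsplit : xN ^ (s - 1 - j)
                = (xN ^ ((t : ℕ) - 1 - j)) * (xN * (xN ^ (s - 1 - (t : ℕ)))) := by
              rw [← pow_succ', ← pow_add]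
              congr 1
              omega
            rw [hsplit, Module.End.mul_apply, Module.End.mul_apply,
              hnstep (s - 1 - (t : ℕ)) (t : ℕ) (by omega),
              show (t : ℕ) + (s - 1 - (t : ℕ)) = s - 1 from by omega]
            show (xN ^ ((t : ℕ) - 1 - j)) (D.x • n (s - 1)) = _
            rw [hnlast, map_smul, hnstep ((t : ℕ) - 1 - j) 0 (by omega), Nat.zero_add]
            congr 2
            rw [show (t : ℕ) + (s - 1 - j) = ((t : ℕ) - 1 - j) + s from by omega,
              Nat.add_mod_right, Nat.mod_eq_of_lt (by omega)]
        have hval : ∀ j ∈ Finset.range s,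
            ((bT.repr ((qc Q (s - 1) j • ((AA ^ j) * (BB ^ (s - 1 - j))))
                (μ (m 0) (n (t : ℕ))))) (⟨s - 1, by omega⟩, t) : k)
              = if j = s - 1 then (q ^ (t : ℕ) * (lam D.a : k)) ^ (s - 1) else 0 := by
          intro j hj
          rw [Finset.mem_range] at hj
          by_cases hjs : j = s - 1
          · subst hjs
            have hterm : (((AA ^ (s - 1)) * (BB ^ (s - 1 - (s - 1))))) (μ (m 0) (n (t : ℕ)))
                = ((q ^ (t : ℕ) * (lam D.a : k)) ^ (s - 1)) • bT (⟨s - 1, by omega⟩, t) := by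
              rw [Nat.sub_self, pow_zero, Module.End.mul_apply, Module.End.one_apply, hAAp,
                hmstep (s - 1) 0 (by omega), Nat.zero_add,
                pow_eig aN _ _ (haNeig (t : ℕ) t.isLt) (s - 1), map_smul, hbT]
            rw [LinearMap.smul_apply, hterm, map_smul, map_smul, Module.Basis.repr_self, qc_self]
            simp [Finsupp.single_apply]
          · obtain ⟨d, hd, _⟩ := hxNt j hj
            have hj2 : ((t : ℕ) + (s - 1 - j)) % s < s := Nat.mod_lt _ hs0
            have hterm : (((AA ^ j) * (BB ^ (s - 1 - j)))) (μ (m 0) (n (t : ℕ)))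
                = (d * (q ^ (((t : ℕ) + (s - 1 - j)) % s) * (lam D.a : k)) ^ j) •
                    bT (⟨j, hj⟩, ⟨((t : ℕ) + (s - 1 - j)) % s, hj2⟩) := by
              rw [Module.End.mul_apply, hBBp, hd, map_smul, map_smul, hAAp,
                hmstep j 0 (by omega), Nat.zero_add, pow_eig aN _ _ (haNeig _ hj2) j, map_smul,
                smul_smul, hbT]
            rw [LinearMap.smul_apply, hterm, map_smul, map_smul, Module.Basis.repr_self]
            rw [if_neg hjs]
            have hne : ((⟨j, hj⟩ : Fin s), (⟨((t : ℕ) + (s - 1 - j)) % s, hj2⟩ : Fin s))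
                ≠ ((⟨s - 1, by omega⟩ : Fin s), t) := by
              intro hcon
              apply hjs
              have := congrArg (fun pp => ((pp.1 : Fin s) : ℕ)) hcon
              simpa using this
            rw [Finsupp.smul_apply, Finsupp.smul_apply, Finsupp.single_apply, if_neg hne]
            simp
        rw [Finset.sum_congr rfl hval, Finset.sum_ite_eq' (Finset.range s) (s - 1)] at h2
        rw [if_pos (Finset.mem_range.mpr (by omega))] at h2
        exact (pow_ne_zero _ (mul_ne_zero (pow_ne_zero _ hq0) (Units.ne_zero _))) h2
      -- the class condition
      refine ⟨w0, hwt0, hVind w0 hwt0 ?_⟩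
      intro r c hsum
      have hinj_itf : ∀ t t' : Fin s,
          ((r : ℕ) + s - (t : ℕ)) % s = ((r : ℕ) + s - (t' : ℕ)) % s → t = t' := by
        intro t t' h
        apply Fin.ext
        by_cases h1 : (t : ℕ) ≤ (r : ℕ) <;> by_cases h2 : (t' : ℕ) ≤ (r : ℕ)
        · rw [natmod1 r.isLt h1, natmod1 r.isLt h2] at h; omega
        · rw [natmod1 r.isLt h1, natmod2 r.isLt t'.isLt (by omega)] at h; omega
        · rw [natmod2 r.isLt t.isLt (by omega), natmod1 r.isLt h2] at h; omega
        · rw [natmod2 r.isLt t.isLt (by omega), natmod2 r.isLt t'.isLt (by omega)] at h; omega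
      have hcz : ∀ p : ℕ, ∀ t0 : Fin s, ((r : ℕ) + s - (t0 : ℕ)) % s = p → c t0 = 0 := by
        intro p
        induction p using Nat.strong_induction_on with
        | _ p ih =>
          intro t0 hp
          have hps : p < s := hp ▸ Nat.mod_lt _ hs0
          have happ := congrArg (fun u => (X ^ (s - 1 - p)) u) hsum
          simp only [map_sum, map_zero, map_smul] at happ
          have hterm2 : ∀ t : Fin s,
              c t • (X ^ (s - 1 - p)) ((X ^ (((r : ℕ) + s - (t : ℕ)) % s)) (w0 t))
              = if t = t0 then c t0 • (X ^ (s - 1)) (w0 t0) else 0 := by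
            intro t
            rw [hXadd]
            by_cases ht : t = t0
            · subst ht
              rw [if_pos rfl, hp, show s - 1 - p + p = s - 1 from by omega]
            · rw [if_neg ht]
              have hne : ((r : ℕ) + s - (t : ℕ)) % s ≠ p :=
                fun h => ht (hinj_itf t t0 (h.trans hp.symm))
              by_cases hlt : ((r : ℕ) + s - (t : ℕ)) % s < p
              · rw [ih _ hlt t rfl, zero_smul]
              · rw [hXbig (s - 1 - p + ((r : ℕ) + s - (t : ℕ)) % s) (by omega), smul_zero]
          rw [Finset.sum_congr rfl (fun t _ => hterm2 t),
            Finset.sum_ite_eq' Finset.univ t0 (fun _ => c t0 • (X ^ (s - 1)) (w0 t0))] at happ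
          rw [if_pos (Finset.mem_univ t0)] at happ
          exact (smul_eq_zero.mp happ).resolve_right (hXw t0)
      intro t
      exact hcz (((r : ℕ) + s - (t : ℕ)) % s) t rfl
    · -- the invertible case
      have hXinj : Function.Injective X := by
        intro u u' h
        have h2 : (X ^ s) u = (X ^ s) u' := by
          rw [show (X : T →ₗ[k] T) ^ s = X ^ (s - 1) * X from by
              rw [← pow_succ]; congr 1; omega,
            Module.End.mul_apply, Module.End.mul_apply, h]
        rw [hXs_app, hXs_app] at h2
        exact smul_right_injective T hγ0 h2
      have hXinjpow : ∀ p : ℕ, Function.Injective ((X : T →ₗ[k] T) ^ p) := by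
        intro p
        induction p with
        | zero => intro u u' h; simpa using h
        | succ p ih =>
          intro u u' h
          rw [pow_succ, Module.End.mul_apply, Module.End.mul_apply] at h
          exact hXinj (ih h)
      set ut : Fin s → T := fun t => μ (m ((s - (t : ℕ)) % s)) (n (t : ℕ)) with hut_def
      have hut_wt : ∀ (t : Fin s) (g0 : G),
          D.ι g0 • ut t = ((sig g0 : k) * (lam g0 : k)) • ut t := by
        intro t g0
        rw [hut_def]
        simp only []
        rw [hw8 g0 ((s - (t : ℕ)) % s) (t : ℕ) (Nat.mod_lt _ hs0) t.isLt]
        congr 1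
        have hmod0 : (((s - (t : ℕ)) % s) + (t : ℕ)) % s = 0 := by
          by_cases ht : (t : ℕ) = 0
          · rw [ht, Nat.sub_zero, Nat.mod_self, Nat.add_zero, Nat.zero_mod]
          · rw [Nat.mod_eq_of_lt (show s - (t : ℕ) < s from by omega),
              show s - (t : ℕ) + (t : ℕ) = s from by omega, Nat.mod_self]
        rw [hpowmod _ (hχs g0) (((s - (t : ℕ)) % s) + (t : ℕ)), hmod0, pow_zero, one_mul]
      set w0 : Fin s → T := fun t => (X ^ (t : ℕ)) (ut t) with hw0_def
      have hwt0 : ∀ (t : Fin s) (g0 : G), D.ι g0 • w0 t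
          = (((sig g0 : k) * (lam g0 : k)) * (D.χ g0 : k) ^ (t : ℕ)) • w0 t := by
        intro t g0
        rw [hw0_def]
        simp only []
        rw [hgXp, hut_wt t g0, map_smul, smul_smul]
        congr 1
        ring
      refine ⟨w0, hwt0, hVind w0 hwt0 ?_⟩
      intro r c hsum t0
      have hkey : ∀ t : Fin s, (X ^ (((r : ℕ) + s - (t : ℕ)) % s)) (w0 t)
          = (if (t : ℕ) ≤ (r : ℕ) then (1 : k) else γ) • (X ^ (r : ℕ)) (ut t) := by
        intro t
        rw [hw0_def]
        simp only []
        rw [hXadd]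
        by_cases h : (t : ℕ) ≤ (r : ℕ)
        · rw [if_pos h, one_smul, natmod1 r.isLt h, show (r : ℕ) - (t : ℕ) + (t : ℕ) = (r : ℕ)
            from by omega]
        · rw [if_neg h, natmod2 r.isLt t.isLt (by omega),
            show (r : ℕ) + s - (t : ℕ) + (t : ℕ) = (r : ℕ) + s from by omega, ← hXadd,
            hXs_app, map_smul]
      have hsum2 : (X ^ (r : ℕ))
          (∑ t : Fin s, (c t * (if (t : ℕ) ≤ (r : ℕ) then (1 : k) else γ)) • ut t) = 0 := by
        rw [map_sum, ← hsum]
        refine Finset.sum_congr rfl fun t _ => ?_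
        rw [map_smul, hkey t, smul_smul]
      have hsum3 : ∑ t : Fin s, (c t * (if (t : ℕ) ≤ (r : ℕ) then (1 : k) else γ)) • ut t = 0 :=
        hXinjpow (r : ℕ) (by rw [hsum2, map_zero])
      have hut_ind : LinearIndependent k ut := by
        have hcomp : ut = bT ∘
            (fun t : Fin s => ((⟨(s - (t : ℕ)) % s, Nat.mod_lt _ hs0⟩ : Fin s), t)) := by
          funext t
          rw [Function.comp_apply, hbT]
        rw [hcomp]
        exact bT.linearIndependent.comp _ (fun t t' h => by
          have := congrArg Prod.snd h
          simpa using this)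
      have hz := Fintype.linearIndependent_iff.mp hut_ind _ hsum3 t0
      by_cases h : (t0 : ℕ) ≤ (r : ℕ)
      · rwa [if_pos h, mul_one] at hz
      · rw [if_neg h] at hz
        exact (mul_eq_zero.mp hz).resolve_right hγ0
  -- the submodules
  set v : Fin s × Fin s → T := fun p => (X ^ (p.2 : ℕ)) (w p.1) with hv_def
  haveI : Nonempty (Fin s × Fin s) := ⟨(⟨0, hs0⟩, ⟨0, hs0⟩)⟩
  have hfinT : Module.finrank k T = s * s := by
    rw [Module.finrank_eq_card_basis bT]
    simp
  have hcard : Fintype.card (Fin s × Fin s) = Module.finrank k T := by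
    simp [hfinT]
  set bV : Module.Basis (Fin s × Fin s) k T := basisOfLinearIndependentOfCardEqFinrank hind hcard
    with hbV_def
  have hbV : ∀ p, bV p = v p := fun p => by
    rw [hbV_def, coe_basisOfLinearIndependentOfCardEqFinrank]
  set P : Fin s → Submodule k T :=
    fun t => Submodule.span k (Set.range fun i : Fin s => v (t, i)) with hP_def
  have hvP : ∀ (j : ℕ) (t : Fin s), (X ^ j) (w t) ∈ P t := by
    intro j
    induction j using Nat.strong_induction_on with
    | _ j ih =>
      intro t
      by_cases hj : j < s
      · exact Submodule.subset_span ⟨⟨j, hj⟩, rfl⟩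
      · rw [show j = (j - s) + s from by omega, ← hXadd, hXs_app, map_smul]
        exact Submodule.smul_mem _ _ (ih (j - s) (by omega) t)
  have hPwt : ∀ (t : Fin s) (g0 : G) (j : ℕ), D.ι g0 • ((X ^ j) (w t)) ∈ P t := by
    intro t g0 j
    rw [hgXp, hwt t g0, map_smul, smul_smul]
    exact Submodule.smul_mem _ _ (hvP j t)
  have hPsmul : ∀ (t : Fin s) (h : H) (u : T), u ∈ P t → h • u ∈ P t := by
    intro t h u hu
    have hgen : ∀ (pp : G × ℕ) (i : Fin s), D.bas pp • v (t, i) ∈ P t := by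
      intro pp i
      rw [D.bas_eq, mul_smul, hv_def]
      simp only []
      rw [hxpow_smul, hXadd]
      exact hPwt t pp.1 _
    have hel : ∀ (h : H) (i : Fin s), h • v (t, i) ∈ P t := by
      intro h i
      have hh : h ∈ Submodule.span k (Set.range D.bas) := by
        rw [Module.Basis.span_eq]
        exact Submodule.mem_top
      refine Submodule.span_induction (fun y hy => ?_) ?_ ?_ ?_ hh
      · obtain ⟨pp, rfl⟩ := hy
        exact hgen pp i
      · rw [zero_smul]
        exact (P t).zero_mem
      · intro y z _ _ hy hz
        rw [add_smul]
        exact (P t).add_mem hy hz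
      · intro c y _ hy
        rw [smul_assoc]
        exact Submodule.smul_mem _ _ hy
    refine Submodule.span_induction (fun y hy => ?_) ?_ ?_ ?_ hu
    · obtain ⟨i, rfl⟩ := hy
      exact hel h i
    · rw [smul_zero]
      exact (P t).zero_mem
    · intro y z _ _ hy hz
      rw [smul_add]
      exact (P t).add_mem hy hz
    · intro c y _ hy
      rw [hsmul_comm']
      exact Submodule.smul_mem _ _ hy
  set W : Fin s → Submodule H T := fun t =>
    { carrier := (P t : Set T)
      add_mem' := fun ha hb => (P t).add_mem ha hb
      zero_mem' := (P t).zero_mem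
      smul_mem' := fun h {u} hu => hPsmul t h u hu } with hW_def
  have hWmem : ∀ (t : Fin s) (u : T), u ∈ W t ↔ u ∈ P t := fun t u => Iff.rfl
  refine ⟨W, ?_, ?_⟩
  · -- internal direct sum
    have hsup : (⨆ t, W t) = ⊤ := by
      rw [eq_top_iff]
      intro u _
      have hrep := bV.sum_repr u
      rw [← hrep]
      refine Submodule.sum_mem _ fun p _ => ?_
      refine Submodule.smul_of_tower_mem _ _ ?_
      have hm : bV p ∈ W p.1 := by
        rw [hWmem, hbV]
        exact hvP _ _
      exact Submodule.mem_iSup_of_mem p.1 hm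
    have hindep : iSupIndep W := by
      intro t0
      rw [disjoint_iff_inf_le]
      intro u hu
      obtain ⟨hu1, hu2⟩ := hu
      set Sk : Submodule k T := ⨆ t : {t : Fin s // t ≠ t0}, P t.1 with hSk_def
      have hSksmul : ∀ (h : H) (u : T), u ∈ Sk → h • u ∈ Sk := by
        intro h u hu
        refine Submodule.iSup_induction (motive := fun z => h • z ∈ Sk) _ hu ?_ ?_ ?_
        · intro i y hy
          exact Submodule.mem_iSup_of_mem i (hPsmul i.1 h y hy)
        · show h • (0 : T) ∈ Sk
          rw [smul_zero]
          exact Sk.zero_mem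
        · intro y z hy hz
          show h • (y + z) ∈ Sk
          rw [smul_add]
          exact Sk.add_mem hy hz
      set SH : Submodule H T :=
        { carrier := (Sk : Set T)
          add_mem' := fun ha hb => Sk.add_mem ha hb
          zero_mem' := Sk.zero_mem
          smul_mem' := fun h {u} hu => hSksmul h u hu } with hSH_def
      have hle : (⨆ (t) (_ : t ≠ t0), W t) ≤ SH := by
        refine iSup_le fun t => iSup_le fun ht => ?_
        intro y hy
        exact Submodule.mem_iSup_of_mem (⟨t, ht⟩ : {t : Fin s // t ≠ t0}) hy
      have hu2' : u ∈ Sk := hle hu2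
      have hmem1 : u ∈ Submodule.span k (⇑bV '' {p : Fin s × Fin s | p.1 = t0}) := by
        have hsub : P t0 ≤ Submodule.span k (⇑bV '' {p : Fin s × Fin s | p.1 = t0}) := by
          refine Submodule.span_le.mpr ?_
          rintro y ⟨i, rfl⟩
          exact Submodule.subset_span ⟨(t0, i), rfl, (hbV (t0, i))⟩
        exact hsub hu1
      have hmem2 : u ∈ Submodule.span k (⇑bV '' {p : Fin s × Fin s | p.1 ≠ t0}) := by
        have hsub : Sk ≤ Submodule.span k (⇑bV '' {p : Fin s × Fin s | p.1 ≠ t0}) := by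
          refine iSup_le fun t => ?_
          refine Submodule.span_le.mpr ?_
          rintro y ⟨i, rfl⟩
          exact Submodule.subset_span ⟨(t.1, i), t.2, (hbV (t.1, i))⟩
        exact hsub hu2'
      rw [Module.Basis.mem_span_image] at hmem1 hmem2
      have hrepr0 : bV.repr u = 0 := by
        ext p
        rw [Finsupp.coe_zero, Pi.zero_apply]
        by_contra hne
        have hp1 := hmem1 (Finsupp.mem_support_iff.mpr hne)
        have hp2 := hmem2 (Finsupp.mem_support_iff.mpr hne)
        exact hp2 hp1
      have hu0 : u = 0 := by
        have := congrArg bV.repr.symm hrepr0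
        rwa [LinearEquiv.symm_apply_apply, map_zero] at this
      rw [hu0]
      exact Submodule.zero_mem _
    exact DirectSum.isInternal_submodule_of_iSupIndep_of_iSup_eq_top hindep hsup
  · -- each W t realizes V(χ^t σ λ, γ)
    intro t
    have hmemv : ∀ i : Fin s, v (t, i) ∈ W t := fun i => Submodule.subset_span ⟨i, rfl⟩
    set fam : Fin s → W t := fun i => ⟨v (t, i), hmemv i⟩ with hfam_def
    set incl : W t →ₗ[k] T :=
      { toFun := fun y => (y : T)
        map_add' := fun a b => rfl
        map_smul' := fun c a => rfl } with hincl_def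
    have hfam_ind : LinearIndependent k fam := by
      have h1 : LinearIndependent k (fun i : Fin s => v (t, i)) :=
        hind.comp (fun i : Fin s => (t, i)) (fun i i' h => by
          have := congrArg Prod.snd h
          simpa using this)
      exact LinearIndependent.of_comp incl h1
    have hfam_top : ⊤ ≤ Submodule.span k (Set.range fam) := by
      intro y _
      have hmap : Submodule.map incl (Submodule.span k (Set.range fam)) = P t := by
        rw [Submodule.map_span]
        show Submodule.span k (⇑incl '' Set.range fam)
          = Submodule.span k (Set.range fun i : Fin s => v (t, i))
        congr 1
        ext z
        constructor
        · rintro ⟨-, ⟨i, rfl⟩, rfl⟩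
          exact ⟨i, rfl⟩
        · rintro ⟨i, rfl⟩
          exact ⟨fam i, ⟨i, rfl⟩, rfl⟩
      have h2 : incl y ∈ Submodule.map incl (Submodule.span k (Set.range fam)) := by
        rw [hmap]
        exact y.2
      obtain ⟨y', hy', hyy⟩ := h2
      have heq : y' = y := Subtype.val_injective hyy
      rwa [heq] at hy'
    set bW : Module.Basis (Fin s) k (W t) := Module.Basis.mk hfam_ind hfam_top with hbW_def
    set mfun : ℕ → W t := fun i => if h : i < s then ⟨v (t, ⟨i, h⟩), hmemv _⟩ else 0
      with hmfun_def
    refine ⟨bW, mfun, ?_, ?_, ?_, ?_⟩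
    · intro i
      rw [hmfun_def]
      simp only [Fin.is_lt, dif_pos]
      rw [hbW_def, Module.Basis.mk_apply, hfam_def]
    · intro i hi g0
      apply Subtype.ext
      rw [hmfun_def]
      simp only [dif_pos hi]
      rw [SetLike.val_smul, SetLike.val_smul_of_tower]
      show D.ι g0 • ((X ^ i) (w t)) = _ • ((X ^ i) (w t))
      rw [hgXp, hwt t g0, map_smul, smul_smul]
      congr 1
      simp only [MonoidHom.mul_apply, MonoidHom.pow_apply, Units.val_mul,
        Units.val_pow_eq_pow_val]
      ring
    · intro i hi1
      apply Subtype.ext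
      rw [hmfun_def]
      simp only [dif_pos (show i < s from by omega), dif_pos hi1]
      rw [SetLike.val_smul]
      show D.x • ((X ^ i) (w t)) = (X ^ (i + 1)) (w t)
      have h1 := hXadd 1 i (w t)
      rw [pow_one, Nat.add_comm 1 i] at h1
      exact h1
    · apply Subtype.ext
      rw [hmfun_def]
      simp only [dif_pos (show s - 1 < s from by omega), dif_pos hs0]
      rw [SetLike.val_smul, SetLike.val_smul_of_tower]
      show X ((X ^ (s - 1)) (w t)) = γ • ((X ^ (0 : ℕ)) (w t))
      have h1 := hXadd 1 (s - 1) (w t)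
      rw [pow_one, show 1 + (s - 1) = s from by omega] at h1
      rw [h1, hXs_app, pow_zero, Module.End.one_apply]
end

section
/- For a character λ of G and t ≥ 1, the module V_t(λ) = M(λ)/(x^t·M(λ)) is an indecomposable uniserial weight H-module of length t (its composition factors being V_{χ^j λ}, 0 ≤ j ≤ t−1). -/
open scoped TensorProduct

variable {k G H : Type*} [Field k] [Group G] [Ring H] [Algebra k H]

/-- `M` realizes `V_t(λ) = M(λ)/(x^t · M(λ))`: it has a `k`-basis `m_0, …, m_{t-1}` with
`g • m_i = χ(g)^i λ(g) • m_i`, `x • m_i = m_{i+1}` for `i < t - 1` and `x • m_{t-1} = 0`. -/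
def IsVt (D : HopfOreExt k G H) (lam : G →* kˣ) (t : ℕ)
    (M : Type*) [AddCommGroup M] [Module k M] [Module H M] [IsScalarTower k H M] : Prop :=
  ∃ (b : Module.Basis (Fin t) k M) (m : ℕ → M),
    (∀ i : Fin t, m (i : ℕ) = b i) ∧
    (∀ i < t, ∀ g : G, D.ι g • m i = ((D.χ g : k) ^ i * (lam g : k)) • m i) ∧
    (∀ i : ℕ, i + 1 < t → D.x • m i = m (i + 1)) ∧
    D.x • m (t - 1) = 0

section Aux

variable {M : Type*} [AddCommGroup M] [Module k M] [Module H M] [IsScalarTower k H M]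

theorem HopfOre.hcomm (c : k) (h : H) (v : M) : h • (c • v) = c • (h • v) := by
  have h1 : c • v = (algebraMap k H c) • v := (algebraMap_smul H c v).symm
  rw [h1, smul_smul, ← Algebra.commutes, mul_smul, algebraMap_smul]

theorem HopfOre.ksmul_mem (N : Submodule H M) (c : k) {v : M} (hv : v ∈ N) : c • v ∈ N := by
  rw [show c • v = (algebraMap k H c) • v from (algebraMap_smul H c v).symm]
  exact N.smul_mem _ hv

/-- A `k`-submodule closed under `x` and the `ι g` is an `H`-submodule. -/
def HopfOre.toHSubmodule (D : HopfOreExt k G H) (S : Submodule k M)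
    (hX : ∀ v ∈ S, D.x • v ∈ S) (hG : ∀ (g : G), ∀ v ∈ S, D.ι g • v ∈ S) :
    Submodule H M where
  carrier := S
  add_mem' := fun ha hb => S.add_mem ha hb
  zero_mem' := S.zero_mem
  smul_mem' := by
    intro h v hv
    have hXn : ∀ (n : ℕ), ∀ v ∈ S, D.x ^ n • v ∈ S := by
      intro n
      induction n with
      | zero => intro v hv; rwa [pow_zero, one_smul]
      | succ n IH =>
        intro v hv
        rw [pow_succ, mul_smul]
        exact IH _ (hX v hv)
    let T : Submodule k H :=
      { carrier := {h : H | h • v ∈ S}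
        add_mem' := by
          intro a b ha hb
          simp only [Set.mem_setOf_eq] at *
          rw [add_smul]; exact S.add_mem ha hb
        zero_mem' := by
          simp only [Set.mem_setOf_eq, zero_smul]; exact S.zero_mem
        smul_mem' := by
          intro c h hh
          simp only [Set.mem_setOf_eq] at *
          rw [smul_assoc]
          exact S.smul_mem c hh }
    have htop : (⊤ : Submodule k H) ≤ T := by
      rw [← D.bas.span_eq]
      apply Submodule.span_le.mpr
      rintro _ ⟨p, rfl⟩
      show D.bas p • v ∈ S
      rw [D.bas_eq, mul_smul]
      exact hG _ _ (hXn _ _ hv)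
    exact htop (Submodule.mem_top (x := h))

theorem HopfOre.mem_toHSubmodule (D : HopfOreExt k G H) (S : Submodule k M) (hX) (hG) (v : M) :
    v ∈ HopfOre.toHSubmodule D S hX hG ↔ v ∈ S := Iff.rfl

end Aux

/-- `V_t(λ)` is an indecomposable uniserial weight `H`-module of length `t`. -/
theorem vt_indecomposable_uniserial (D : HopfOreExt k G H) (lam : G →* kˣ) (t : ℕ)
    (ht : 1 ≤ t)
    (M : Type*) [AddCommGroup M] [Module k M] [Module H M] [IsScalarTower k H M]
    (hM : IsVt D lam t M) :
    IsWeightModule D M ∧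
    (∀ N₁ N₂ : Submodule H M, IsCompl N₁ N₂ → N₁ = ⊥ ∨ N₂ = ⊥) ∧
    (∀ N₁ N₂ : Submodule H M, N₁ ≤ N₂ ∨ N₂ ≤ N₁) ∧
    ∃ c : CompositionSeries (Submodule H M),
      c.head = ⊥ ∧ c.last = ⊤ ∧ c.length = t := by
  classical
  obtain ⟨b, m, hm, hgm, hxm, hxt⟩ := hM
  -- the extended basis family
  set m' : ℕ → M := fun n => if h : n < t then b ⟨n, h⟩ else 0 with hm'def
  have hm'lt : ∀ (n : ℕ) (h : n < t), m' n = b ⟨n, h⟩ := by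
    intro n h; simp only [hm'def, dif_pos h]
  have hm'ge : ∀ (n : ℕ), t ≤ n → m' n = 0 := by
    intro n h; simp only [hm'def, dif_neg (not_lt.mpr h)]
  have hbm' : ∀ i : Fin t, b i = m' (i : ℕ) := by
    intro i; rw [hm'lt _ i.isLt]
  have hm'm : ∀ (n : ℕ), n < t → m' n = m n := by
    intro n h; rw [hm'lt _ h, ← hm ⟨n, h⟩]
  -- x shifts the extended family
  have hx' : ∀ n : ℕ, D.x • m' n = m' (n + 1) := by
    intro n
    by_cases h1 : n + 1 < t
    · rw [hm'm _ (by omega), hm'm _ h1, hxm _ h1]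
    · by_cases h0 : n < t
      · have hn : n = t - 1 := by omega
        rw [hm'm _ h0, hm'ge _ (by omega), hn, hxt]
      · rw [hm'ge _ (by omega), hm'ge _ (by omega), smul_zero]
  -- coordinates of the extended family
  have hreprm' : ∀ (n : ℕ) (i : Fin t), b.repr (m' n) i = if (i : ℕ) = n then 1 else 0 := by
    intro n i
    by_cases h : n < t
    · rw [hm'lt _ h, b.repr_self, Finsupp.single_apply]
      by_cases he : (⟨n, h⟩ : Fin t) = i
      · rw [if_pos he, if_pos]; exact (Fin.ext_iff.mp he).symm
      · rw [if_neg he, if_neg]; intro hc; exact he (Fin.ext hc.symm)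
    · rw [hm'ge _ (by omega), map_zero, Finsupp.coe_zero, Pi.zero_apply,
        if_neg (by omega : ¬ (i : ℕ) = n)]
  -- x action in coordinates
  have hshift : ∀ (v : M) (i : Fin t), b.repr (D.x • v) i =
      if h : 0 < (i : ℕ) then b.repr v ⟨(i : ℕ) - 1, by omega⟩ else 0 := by
    intro v i
    set X : M →ₗ[k] M :=
      ⟨⟨fun v => D.x • v, fun u w => smul_add D.x u w⟩,
        fun c u => HopfOre.hcomm c D.x u⟩ with hXdef
    have key : (b.coord i).comp X =
        (if h : 0 < (i : ℕ) then b.coord ⟨(i : ℕ) - 1, by omega⟩ else (0 : M →ₗ[k] k)) := by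
      apply b.ext
      intro i₀
      simp only [LinearMap.coe_comp, Function.comp_apply, hXdef, LinearMap.coe_mk, AddHom.coe_mk]
      rw [Module.Basis.coord_apply, hbm' i₀, hx' (i₀ : ℕ), hreprm']
      by_cases h : 0 < (i : ℕ)
      · rw [dif_pos h]
        rw [Module.Basis.coord_apply, hreprm']
        by_cases he : (i : ℕ) = (i₀ : ℕ) + 1
        · rw [if_pos he, if_pos (show (i : ℕ) - 1 = (i₀ : ℕ) by omega)]
        · rw [if_neg he, if_neg (show ¬ ((i : ℕ) - 1 = (i₀ : ℕ)) by omega)]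
      · rw [dif_neg h]
        simp only [LinearMap.zero_apply]
        rw [if_neg (by omega)]
    have h2 := congrArg (fun f : M →ₗ[k] k => f v) key
    simp only [LinearMap.coe_comp, Function.comp_apply, hXdef, LinearMap.coe_mk,
      AddHom.coe_mk] at h2
    by_cases h : 0 < (i : ℕ)
    · rw [dif_pos h] at h2 ⊢
      rw [Module.Basis.coord_apply, Module.Basis.coord_apply] at h2
      exact h2
    · rw [dif_neg h] at h2 ⊢
      rw [Module.Basis.coord_apply] at h2
      simpa using h2
  -- the tail k-submodules
  set S : ℕ → Submodule k M := fun j => Submodule.span k (b '' {i : Fin t | j ≤ (i : ℕ)})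
    with hSdef
  have hbS : ∀ (j : ℕ) (i : Fin t), j ≤ (i : ℕ) → b i ∈ S j := by
    intro j i hi
    exact Submodule.subset_span ⟨i, hi, rfl⟩
  have hm'S : ∀ (j n : ℕ), j ≤ n → m' n ∈ S j := by
    intro j n hn
    by_cases h : n < t
    · rw [hm'lt _ h]; exact hbS j ⟨n, h⟩ hn
    · rw [hm'ge _ (by omega)]; exact (S j).zero_mem
  have hSx : ∀ (j : ℕ), ∀ v ∈ S j, D.x • v ∈ S j := by
    intro j v hv
    induction hv using Submodule.span_induction with
    | mem w hw =>
      obtain ⟨i, hi, rfl⟩ := hw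
      rw [hbm' i, hx']
      have hi' : j ≤ (i : ℕ) := hi
      exact hm'S j _ (by omega)
    | zero => rw [smul_zero]; exact (S j).zero_mem
    | add u w _ _ hu hw => rw [smul_add]; exact (S j).add_mem hu hw
    | smul c u _ hu => rw [HopfOre.hcomm]; exact (S j).smul_mem c hu
  have hgb : ∀ (i : Fin t) (g : G), D.ι g • b i = ((D.χ g : k) ^ (i : ℕ) * (lam g : k)) • b i := by
    intro i g
    rw [hbm' i, hm'm _ i.isLt]
    exact hgm _ i.isLt g
  have hSg : ∀ (j : ℕ) (g : G), ∀ v ∈ S j, D.ι g • v ∈ S j := by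
    intro j g v hv
    induction hv using Submodule.span_induction with
    | mem w hw =>
      obtain ⟨i, hi, rfl⟩ := hw
      rw [hgb i g]
      exact (S j).smul_mem _ (hbS j i hi)
    | zero => rw [smul_zero]; exact (S j).zero_mem
    | add u w _ _ hu hw => rw [smul_add]; exact (S j).add_mem hu hw
    | smul c u _ hu => rw [HopfOre.hcomm]; exact (S j).smul_mem c hu
  -- the tail H-submodules
  set W : ℕ → Submodule H M := fun j => HopfOre.toHSubmodule D (S j) (hSx j) (hSg j)
    with hWdef
  have memW : ∀ (j : ℕ) (v : M), v ∈ W j ↔ v ∈ S j := fun _ _ => Iff.rfl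
  -- coordinates of elements of W j vanish below j
  have hWrepr : ∀ (j : ℕ), ∀ v ∈ W j, ∀ i : Fin t, (i : ℕ) < j → b.repr v i = 0 := by
    intro j v hv
    rw [memW] at hv
    induction hv using Submodule.span_induction with
    | mem w hw =>
      intro i hi
      obtain ⟨i', hi', rfl⟩ := hw
      have hi'' : j ≤ ((i' : Fin t) : ℕ) := hi'
      rw [b.repr_self, Finsupp.single_apply, if_neg]
      intro hc
      rw [hc] at hi''
      omega
    | zero => intro i _; simp
    | add u w _ _ hu hw => intro i hi; rw [map_add, Finsupp.add_apply, hu i hi, hw i hi, add_zero]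
    | smul c u _ hu => intro i hi; rw [map_smul, Finsupp.smul_apply, hu i hi, smul_zero]
  -- the key lemma: tails of submodules
  have hkey : ∀ (N : Submodule H M) (n : ℕ) (j : Fin t), t - (j : ℕ) ≤ n →
      ∀ v ∈ N, (∀ i : Fin t, (i : ℕ) < (j : ℕ) → b.repr v i = 0) → b.repr v j ≠ 0 →
      ∀ i : Fin t, (j : ℕ) ≤ (i : ℕ) → b i ∈ N := by
    intro N n
    induction n with
    | zero => intro j hj; exact absurd hj (by have := j.isLt; omega)
    | succ n IH =>
      intro j hj v hvN hvlow hvj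
      have hstep : ∀ i : Fin t, (j : ℕ) < (i : ℕ) → b i ∈ N := by
        intro i hi
        have hj1 : (j : ℕ) + 1 < t := by have := i.isLt; omega
        have e1 : t - ((⟨(j : ℕ) + 1, hj1⟩ : Fin t) : ℕ) ≤ n := by
          simp only [Fin.val_mk]; omega
        have e2 : ((⟨(j : ℕ) + 1, hj1⟩ : Fin t) : ℕ) ≤ (i : ℕ) := by
          simp only [Fin.val_mk]; omega
        refine IH ⟨(j : ℕ) + 1, hj1⟩ e1 (D.x • v) (N.smul_mem _ hvN) ?_ ?_ i e2
        · intro i' hi'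
          rw [hshift]
          by_cases h0 : 0 < (i' : ℕ)
          · rw [dif_pos h0]
            exact hvlow _ (by simp at hi' ⊢; omega)
          · rw [dif_neg h0]
        · rw [hshift, dif_pos (by simp)]
          convert hvj using 2
          exact Fin.ext (by simp)
      have hsum : b.repr v j • b j =
          v - ∑ i ∈ Finset.univ.filter (fun i : Fin t => (j : ℕ) < (i : ℕ)),
            b.repr v i • b i := by
        rw [eq_sub_iff_add_eq]
        have h1 : ∑ i ∈ Finset.univ.filter (fun i : Fin t => (j : ℕ) ≤ (i : ℕ)),
            b.repr v i • b i = ∑ i : Fin t, b.repr v i • b i := by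
          apply Finset.sum_subset (Finset.filter_subset _ _)
          intro i _ hi
          simp only [Finset.mem_filter, Finset.mem_univ, true_and, not_le] at hi
          rw [hvlow i hi, zero_smul]
        have h2 : Finset.univ.filter (fun i : Fin t => (j : ℕ) ≤ (i : ℕ)) =
            insert j (Finset.univ.filter (fun i : Fin t => (j : ℕ) < (i : ℕ))) := by
          ext i
          simp only [Finset.mem_filter, Finset.mem_univ, true_and, Finset.mem_insert]
          constructor
          · intro h
            rcases Nat.lt_or_ge (j : ℕ) (i : ℕ) with h' | h'
            · exact Or.inr h'
            · exact Or.inl (Fin.ext (by omega))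
          · rintro (rfl | h)
            · exact le_rfl
            · omega
        have h3 := b.sum_repr v
        rw [← h1, h2, Finset.sum_insert (by simp)] at h3
        exact h3
      have hbj : b j ∈ N := by
        have h3 : b.repr v j • b j ∈ N := by
          rw [hsum]
          exact N.sub_mem hvN (Submodule.sum_mem _ (fun i hi => by
            simp only [Finset.mem_filter, Finset.mem_univ, true_and] at hi
            exact HopfOre.ksmul_mem N _ (hstep i hi)))
        have := HopfOre.ksmul_mem N (b.repr v j)⁻¹ h3
        rwa [smul_smul, inv_mul_cancel₀ hvj, one_smul] at this
      intro i hi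
      rcases Nat.lt_or_ge (j : ℕ) (i : ℕ) with h' | h'
      · exact hstep i h'
      · have : i = j := Fin.ext (by omega)
        rwa [this]
  -- classification of submodules
  have hclass : ∀ N : Submodule H M, ∃ j : ℕ, j ≤ t ∧ N = W j := by
    intro N
    by_cases hbot : N = ⊥
    · refine ⟨t, le_rfl, ?_⟩
      rw [hbot]
      symm
      rw [eq_bot_iff]
      intro v hv
      rw [memW] at hv
      have : {i : Fin t | t ≤ (i : ℕ)} = ∅ := by
        ext i; simp only [Set.mem_setOf_eq, Set.mem_empty_iff_false, iff_false, not_le]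
        exact i.isLt
      rw [hSdef] at hv
      simp only [this, Set.image_empty, Submodule.span_empty, Submodule.mem_bot] at hv
      simp [hv]
    · obtain ⟨v₀, hv₀N, hv₀⟩ := (Submodule.ne_bot_iff N).mp hbot
      have hPne : ∃ n : ℕ, ∃ hn : n < t, ∃ v ∈ N, b.repr v ⟨n, hn⟩ ≠ 0 := by
        have : b.repr v₀ ≠ 0 := fun hc => hv₀ (by
          have := congrArg b.repr.symm hc
          simpa using this)
        obtain ⟨i, hi⟩ := Finsupp.ne_iff.mp this
        exact ⟨(i : ℕ), i.isLt, v₀, hv₀N, by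
          simpa only [Fin.eta, Finsupp.coe_zero, Pi.zero_apply] using hi⟩
      set j₀ := sInf {n : ℕ | ∃ hn : n < t, ∃ v ∈ N, b.repr v ⟨n, hn⟩ ≠ 0} with hj₀def
      have hPmem : j₀ ∈ {n : ℕ | ∃ hn : n < t, ∃ v ∈ N, b.repr v ⟨n, hn⟩ ≠ 0} :=
        Nat.sInf_mem hPne
      obtain ⟨hj₀t, v₁, hv₁N, hv₁⟩ := hPmem
      have hmin : ∀ v ∈ N, ∀ i : Fin t, (i : ℕ) < j₀ → b.repr v i = 0 := by
        intro v hv i hi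
        by_contra hc
        have : (i : ℕ) ∈ {n : ℕ | ∃ hn : n < t, ∃ v ∈ N, b.repr v ⟨n, hn⟩ ≠ 0} :=
          ⟨i.isLt, v, hv, by simpa only [Fin.eta] using hc⟩
        have h5 : j₀ ≤ (i : ℕ) := Nat.sInf_le this
        omega
      have hbi : ∀ i : Fin t, j₀ ≤ (i : ℕ) → b i ∈ N :=
        hkey N t ⟨j₀, hj₀t⟩ (Nat.sub_le t _) v₁ hv₁N (hmin v₁ hv₁N) hv₁
      refine ⟨j₀, le_of_lt hj₀t, le_antisymm ?_ ?_⟩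
      · intro v hv
        rw [memW]
        have hsum : (∑ i : Fin t, b.repr v i • b i) ∈ S j₀ := by
          refine Submodule.sum_mem _ (fun i _ => ?_)
          rcases Nat.lt_or_ge (i : ℕ) j₀ with h' | h'
          · rw [hmin v hv i h', zero_smul]; exact (S j₀).zero_mem
          · exact (S j₀).smul_mem _ (hbS j₀ i h')
        rwa [b.sum_repr v] at hsum
      · intro v hv
        rw [memW] at hv
        have : S j₀ ≤ Submodule.restrictScalars k N := by
          apply Submodule.span_le.mpr
          rintro _ ⟨i, hi, rfl⟩
          exact hbi i hi
        exact this hv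
  -- monotonicity
  have hWmono : ∀ j j' : ℕ, j ≤ j' → W j' ≤ W j := by
    intro j j' h v hv
    rw [memW] at *
    refine Submodule.span_mono ?_ hv
    apply Set.image_mono
    intro i hi
    simp only [Set.mem_setOf_eq] at *
    omega
  have hltW : ∀ a c : ℕ, W a < W c → c < a := by
    intro a c h
    by_contra hc
    exact absurd (hWmono a c (by omega)) (not_le_of_gt h)
  have hWstrict : ∀ j : ℕ, j < t → W (j + 1) < W j := by
    intro j hj
    refine lt_of_le_of_ne (hWmono j (j + 1) (by omega)) ?_
    intro hc
    have h1 : b ⟨j, hj⟩ ∈ W j := by rw [memW]; exact hbS j ⟨j, hj⟩ le_rfl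
    rw [← hc] at h1
    have h2 := hWrepr (j + 1) _ h1 ⟨j, hj⟩ (by simp)
    rw [b.repr_self, Finsupp.single_apply, if_pos rfl] at h2
    exact one_ne_zero h2
  have hW0 : W 0 = ⊤ := by
    rw [eq_top_iff]
    intro v _
    rw [memW]
    have : {i : Fin t | 0 ≤ (i : ℕ)} = Set.univ := by ext i; simp
    rw [hSdef]
    simp only [this, Set.image_univ, b.span_eq]
    trivial
  have hWt : W t = ⊥ := by
    rw [eq_bot_iff]
    intro v hv
    rw [memW] at hv
    have : {i : Fin t | t ≤ (i : ℕ)} = ∅ := by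
      ext i; simp only [Set.mem_setOf_eq, Set.mem_empty_iff_false, iff_false, not_le]
      exact i.isLt
    rw [hSdef] at hv
    simp only [this, Set.image_empty, Submodule.span_empty, Submodule.mem_bot] at hv
    simp [hv]
  -- total order
  have htotal : ∀ N₁ N₂ : Submodule H M, N₁ ≤ N₂ ∨ N₂ ≤ N₁ := by
    intro N₁ N₂
    obtain ⟨j₁, hj₁, rfl⟩ := hclass N₁
    obtain ⟨j₂, hj₂, rfl⟩ := hclass N₂
    rcases Nat.le_or_le j₁ j₂ with h | h
    · exact Or.inr (hWmono j₁ j₂ h)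
    · exact Or.inl (hWmono j₂ j₁ h)
  refine ⟨?_, ?_, htotal, ?_⟩
  · -- weight module
    rw [IsWeightModule, eq_top_iff, ← b.span_eq]
    apply Submodule.span_le.mpr
    rintro _ ⟨i, rfl⟩
    apply Submodule.subset_span
    refine ⟨D.χ ^ (i : ℕ) * lam, fun g => ?_⟩
    have hc : (((D.χ ^ (i : ℕ) * lam) g : kˣ) : k) = (D.χ g : k) ^ (i : ℕ) * (lam g : k) := by
      simp
    rw [hc, hgb i g]
  · -- indecomposable
    intro N₁ N₂ hcompl
    rcases htotal N₁ N₂ with h | h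
    · left
      rw [← hcompl.inf_eq_bot]
      exact (inf_eq_left.mpr h).symm
    · right
      rw [← hcompl.inf_eq_bot]
      exact (inf_eq_right.mpr h).symm
  · -- composition series
    refine ⟨⟨t, fun i => W (t - (i : ℕ)), ?_⟩, ?_, ?_, rfl⟩
    · intro i
      show W (t - ((i : ℕ))) ⋖ W (t - ((i : ℕ) + 1))
      have hi := i.isLt
      have he : t - (i : ℕ) = (t - ((i : ℕ) + 1)) + 1 := by omega
      constructor
      · rw [he]; exact hWstrict _ (by omega)
      · intro N h1 h2
        obtain ⟨j', _, rfl⟩ := hclass N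
        have := hltW _ _ h1
        have := hltW _ _ h2
        omega
    · show W (t - ((0 : Fin (t + 1)) : ℕ)) = ⊥
      simp only [Fin.val_zero, Nat.sub_zero]
      exact hWt
    · show W (t - ((Fin.last t : Fin (t + 1)) : ℕ)) = ⊤
      simp only [Fin.val_last, Nat.sub_self]
      exact hW0
end
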